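/- Let (H, B) be a commutative Hopf heap over a field k with a Rota-Baxter operator B satisfying ε ∘ B = ε, let (M, T) be a Rota-Baxter Hopf heap module over (H, B), and let x ∈ H be group-like. Set M^{coH}_x := {m ∈ M : ρ(m) = m ⊗ x}, and define T̂(m ⊗ h) := T(m ◁ (x ⊗ h₁))₍₀₎ ◁ (T(m ◁ (x ⊗ h₁))₍₁₎ ⊗ x) ⊗ B(h₂) for m ∈ M^{coH}_x, h ∈ H, where M^{coH}_x ⊗ H carries the right H-Hopf heap module structure (m ⊗ h) ◁ (g ⊗ l) = m ⊗ [h,g,l] and coaction m ⊗ h ↦ (m ⊗ h₁) ⊗ h₂. Then: (a) the image of T̂ is contained in M^{coH}_x ⊗ H; and (b) the map α : M^{coH}_x ⊗ H → M, α(m ⊗ h) = m ◁ (x ⊗ h), is an isomorphism of Rota-Baxter Hopf heap modules over (H,B), i.e. α is a bijective right H-Hopf heap module map with α ∘ T̂ = T ∘ α. -/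

import Mathlib

open TensorProduct

noncomputable section

variable (k : Type*) [Field k]

section Shuffles

variable (A B P Q R S : Type*)
  [AddCommGroup A] [Module k A] [AddCommGroup B] [Module k B]
  [AddCommGroup P] [Module k P] [AddCommGroup Q] [Module k Q]
  [AddCommGroup R] [Module k R] [AddCommGroup S] [Module k S]

/-- `(a ⊗ b) ⊗ ((p ⊗ q) ⊗ (r ⊗ s)) ↦ (a ⊗ (q ⊗ r)) ⊗ (b ⊗ (p ⊗ s))`, the shuffle appearing in
the compatibility of a Hopf-heap bracket with comultiplication:
`Δ([a,b,c]) = [a₁,b₂,c₁] ⊗ [a₂,b₁,c₂]`. -/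
def sweedlerShuffle :
    ((A ⊗[k] B) ⊗[k] ((P ⊗[k] Q) ⊗[k] (R ⊗[k] S))) →ₗ[k]
      ((A ⊗[k] (Q ⊗[k] R)) ⊗[k] (B ⊗[k] (P ⊗[k] S))) :=
  (tensorTensorTensorComm k A B (Q ⊗[k] R) (P ⊗[k] S)).toLinearMap ∘ₗ
    (TensorProduct.map LinearMap.id
      ((tensorTensorTensorComm k Q P R S).toLinearMap ∘ₗ
        TensorProduct.map (TensorProduct.comm k P Q).toLinearMap LinearMap.id))

/-- `u₁ ⊗ (u₂ ⊗ (u₃ ⊗ u₄)) ↦ (u₁ ⊗ (u₄ ⊗ u₂)) ⊗ u₃`, the shuffle appearing in the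
Rota–Baxter identity. -/
def rbShuffle :
    (A ⊗[k] (P ⊗[k] (Q ⊗[k] R))) →ₗ[k] ((A ⊗[k] (R ⊗[k] P)) ⊗[k] Q) :=
  (TensorProduct.assoc k A (R ⊗[k] P) Q).symm.toLinearMap ∘ₗ
    TensorProduct.map LinearMap.id
      ((TensorProduct.comm k Q (R ⊗[k] P)).toLinearMap ∘ₗ
        (TensorProduct.assoc k Q R P).toLinearMap ∘ₗ
        (TensorProduct.comm k P (Q ⊗[k] R)).toLinearMap)

end Shuffles

section Mul

variable {C : Type*} [AddCommGroup C] [Module k C]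

/-- Right multiplication `a ↦ μ (a ⊗ b)` by a fixed element, for a bilinear product `μ`. -/
def rmulBy (μ : (C ⊗[k] C) →ₗ[k] C) (b : C) : C →ₗ[k] C :=
  μ ∘ₗ ((TensorProduct.mk k C C).flip b)

end Mul

section Heap

variable {C : Type*} [AddCommGroup C] [Module k C] [Coalgebra k C]

/-- Iterated comultiplication `a ↦ a₁ ⊗ (a₂ ⊗ a₃)`. -/
def comul2 : C →ₗ[k] (C ⊗[k] (C ⊗[k] C)) :=
  (TensorProduct.map LinearMap.id Coalgebra.comul) ∘ₗ Coalgebra.comul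

/-- Iterated comultiplication `a ↦ a₁ ⊗ (a₂ ⊗ (a₃ ⊗ a₄))`. -/
def comul3 : C →ₗ[k] (C ⊗[k] (C ⊗[k] (C ⊗[k] C))) :=
  (TensorProduct.map LinearMap.id (comul2 k)) ∘ₗ Coalgebra.comul

/-- The pointwise ternary bracket `[a,b,c]` of a Hopf heap with structure map `χ`. -/
def br (χ : (C ⊗[k] (C ⊗[k] C)) →ₗ[k] C) (a b c : C) : C := χ (a ⊗ₜ[k] (b ⊗ₜ[k] c))

/-- `x` is a group-like element of the coalgebra `C`. -/
def IsGrouplike (x : C) : Prop :=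
  Coalgebra.comul (R := k) x = x ⊗ₜ[k] x ∧ Coalgebra.counit (R := k) x = 1

/-- `(C, Δ, ε, χ)` is a Hopf heap: `χ` is a coalgebra map `C ⊗ C^cop ⊗ C → C`
(counit and comultiplication conditions, the latter in the Sweedler form
`Δ([a,b,c]) = [a₁,b₂,c₁] ⊗ [a₂,b₁,c₂]`), the bracket is associative
(`[[a,b,c],d,h] = [a,b,[c,d,h]]`), and `[c₁,c₂,a] = ε(c)a = [a,c₁,c₂]`. -/
structure IsHopfHeap (χ : (C ⊗[k] (C ⊗[k] C)) →ₗ[k] C) : Prop where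
  counit_br : ∀ a b c : C,
    Coalgebra.counit (R := k) (br k χ a b c) =
      Coalgebra.counit (R := k) a * Coalgebra.counit (R := k) b * Coalgebra.counit (R := k) c
  comul_br : ∀ a b c : C,
    Coalgebra.comul (R := k) (br k χ a b c) =
      TensorProduct.map χ χ (sweedlerShuffle k C C C C C C
        ((Coalgebra.comul (R := k) a) ⊗ₜ[k]
          ((Coalgebra.comul (R := k) b) ⊗ₜ[k] (Coalgebra.comul (R := k) c))))
  assoc_br : ∀ a b c d h : C,
    br k χ (br k χ a b c) d h = br k χ a b (br k χ c d h)
  left_cancel : ∀ c a : C,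
    χ ((TensorProduct.assoc k C C C) ((Coalgebra.comul (R := k) c) ⊗ₜ[k] a)) =
      Coalgebra.counit (R := k) c • a
  right_cancel : ∀ c a : C,
    χ (a ⊗ₜ[k] (Coalgebra.comul (R := k) c)) = Coalgebra.counit (R := k) c • a

/-- `B` is a Rota–Baxter operator on the Hopf heap `(C, Δ, χ)`:
`B [a,b,c] = [B a, B b, B c]` and
`B(a₁) ⊗ B(a₂) = [B(a)₁, B(B(a)₄), B(B(a)₂)] ⊗ B(a)₃`. -/
structure IsRBOp (χ : (C ⊗[k] (C ⊗[k] C)) →ₗ[k] C) (B : C →ₗ[k] C) : Prop where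
  map_br : ∀ a b c : C, B (br k χ a b c) = br k χ (B a) (B b) (B c)
  rb : ∀ a : C,
    TensorProduct.map B B (Coalgebra.comul (R := k) a) =
      TensorProduct.map (χ ∘ₗ TensorProduct.map LinearMap.id (TensorProduct.map B B))
        LinearMap.id (rbShuffle k C C C C (comul3 k (B a)))

/-- The multiplication `a ·ₓ b = [a, x, b]` of the Hopf algebra `H_x(C)`, as a linear map. -/
def heapMul (χ : (C ⊗[k] (C ⊗[k] C)) →ₗ[k] C) (x : C) : (C ⊗[k] C) →ₗ[k] C :=
  χ ∘ₗ TensorProduct.map LinearMap.id (TensorProduct.mk k C C x)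

/-- The antipode `S_x(a) = [x, a, x]` of the Hopf algebra `H_x(C)`, as a linear map. -/
def heapAntipode (χ : (C ⊗[k] (C ⊗[k] C)) →ₗ[k] C) (x : C) : C →ₗ[k] C :=
  χ ∘ₗ (TensorProduct.mk k C (C ⊗[k] C) x) ∘ₗ ((TensorProduct.mk k C C).flip x)

end Heap

section HeapHom

variable {C D : Type*} [AddCommGroup C] [Module k C] [Coalgebra k C]
  [AddCommGroup D] [Module k D] [Coalgebra k D]

/-- `f` is a homomorphism of Hopf heaps: a coalgebra map preserving the bracket. -/
def IsHeapHom (χC : (C ⊗[k] (C ⊗[k] C)) →ₗ[k] C) (χD : (D ⊗[k] (D ⊗[k] D)) →ₗ[k] D)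
    (f : C →ₗ[k] D) : Prop :=
  (∀ a : C, Coalgebra.comul (R := k) (f a) = TensorProduct.map f f (Coalgebra.comul (R := k) a)) ∧
  (∀ a : C, Coalgebra.counit (R := k) (f a) = Coalgebra.counit (R := k) a) ∧
  (∀ a b c : C, f (br k χC a b c) = br k χD (f a) (f b) (f c))

end HeapHom

section HopfAlg

variable (H : Type*) [Ring H] [HopfAlgebra k H]

/-- The Hopf-heap structure map `a ⊗ b ⊗ c ↦ a · S(b) · c` of a Hopf algebra. -/
def hopfHeapChi : (H ⊗[k] (H ⊗[k] H)) →ₗ[k] H :=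
  (LinearMap.mul' k H) ∘ₗ TensorProduct.map LinearMap.id
    ((LinearMap.mul' k H) ∘ₗ TensorProduct.map (HopfAlgebra.antipode (R := k)) LinearMap.id)

/-- The triple multiplication `a ⊗ (b ⊗ c) ↦ a·(b·c)`. -/
def mulTriple : (H ⊗[k] (H ⊗[k] H)) →ₗ[k] H :=
  (LinearMap.mul' k H) ∘ₗ TensorProduct.map LinearMap.id (LinearMap.mul' k H)

end HopfAlg

end
section Stmt19

variable {k : Type*} [Field k] {H : Type*} [AddCommGroup H] [Module k H] [Coalgebra k H]
  {M : Type*} [AddCommGroup M] [Module k M]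

/-- The coinvariants `M^{coH}_x = {m | ρ(m) = m ⊗ x}` of a right coaction. -/
noncomputable def rcoinv (x : H) (ρ : M →ₗ[k] (M ⊗[k] H)) : Submodule k M :=
  LinearMap.ker (ρ - (TensorProduct.mk k M H).flip x)

/-- The projection `P(m) = m₍₀₎ ◁ (m₍₁₎ ⊗ x)`. -/
noncomputable def rP (x : H) (ρ : M →ₗ[k] (M ⊗[k] H))
    (ψ : (M ⊗[k] (H ⊗[k] H)) →ₗ[k] M) : M →ₗ[k] M :=
  ψ ∘ₗ (TensorProduct.map LinearMap.id ((TensorProduct.mk k H H).flip x)) ∘ₗ ρ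

/-- `m ⊗ h ↦ m ◁ (x ⊗ h)` on `M ⊗ H`. -/
noncomputable def ralphaT (x : H) (ψ : (M ⊗[k] (H ⊗[k] H)) →ₗ[k] M) :
    (M ⊗[k] H) →ₗ[k] M :=
  ψ ∘ₗ TensorProduct.map LinearMap.id (TensorProduct.mk k H H x)

/-- `m ⊗ h ↦ P(T(m ◁ (x ⊗ h)))`. -/
noncomputable def rF (x : H) (ρ : M →ₗ[k] (M ⊗[k] H))
    (ψ : (M ⊗[k] (H ⊗[k] H)) →ₗ[k] M) (T : M →ₗ[k] M) : (M ⊗[k] H) →ₗ[k] M :=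
  (rP x ρ ψ) ∘ₗ T ∘ₗ (ralphaT x ψ)

/-- The Rota–Baxter operator
`T̂(m ⊗ h) = T(m ◁ (x ⊗ h₁))₍₀₎ ◁ (T(m ◁ (x ⊗ h₁))₍₁₎ ⊗ x) ⊗ B(h₂)` on `M^{coH}_x ⊗ H`,
viewed as a map into `M ⊗ H`. -/
noncomputable def rThat (x : H) (ρ : M →ₗ[k] (M ⊗[k] H))
    (ψ : (M ⊗[k] (H ⊗[k] H)) →ₗ[k] M) (T : M →ₗ[k] M) (B : H →ₗ[k] H) :
    (↥(rcoinv x ρ) ⊗[k] H) →ₗ[k] (M ⊗[k] H) :=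
  (TensorProduct.map (rF x ρ ψ T) B) ∘ₗ (TensorProduct.assoc k M H H).symm.toLinearMap ∘ₗ
    (TensorProduct.map (rcoinv x ρ).subtype (Coalgebra.comul (R := k)))

/-- The structure map `α : M^{coH}_x ⊗ H → M`, `m ⊗ h ↦ m ◁ (x ⊗ h)`. -/
noncomputable def ralpha (x : H) (ρ : M →ₗ[k] (M ⊗[k] H))
    (ψ : (M ⊗[k] (H ⊗[k] H)) →ₗ[k] M) : (↥(rcoinv x ρ) ⊗[k] H) →ₗ[k] M :=
  (ralphaT x ψ) ∘ₗ TensorProduct.map (rcoinv x ρ).subtype LinearMap.id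

/-- The coaction `m ⊗ h ↦ (m ⊗ h₁) ⊗ h₂` on `M^{coH}_x ⊗ H`. -/
noncomputable def rrhoN (x : H) (ρ : M →ₗ[k] (M ⊗[k] H)) :
    (↥(rcoinv x ρ) ⊗[k] H) →ₗ[k] ((↥(rcoinv x ρ) ⊗[k] H) ⊗[k] H) :=
  (TensorProduct.assoc k ↥(rcoinv x ρ) H H).symm.toLinearMap ∘ₗ
    TensorProduct.map LinearMap.id (Coalgebra.comul (R := k))

/-- The action `(m ⊗ h) ◁ (g ⊗ l) = m ⊗ [h,g,l]` on `M^{coH}_x ⊗ H`. -/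
noncomputable def rpsiN (χ : (H ⊗[k] (H ⊗[k] H)) →ₗ[k] H) (x : H)
    (ρ : M →ₗ[k] (M ⊗[k] H)) :
    ((↥(rcoinv x ρ) ⊗[k] H) ⊗[k] (H ⊗[k] H)) →ₗ[k] (↥(rcoinv x ρ) ⊗[k] H) :=
  (TensorProduct.map LinearMap.id χ) ∘ₗ
    (TensorProduct.assoc k ↥(rcoinv x ρ) H (H ⊗[k] H)).toLinearMap

end Stmt19


section RBAux

open Coalgebra TensorProduct

variable {k : Type*} [Field k] {H : Type*} [AddCommGroup H] [Module k H] [Coalgebra k H]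

/-! ### shuffle evaluation on pure tensors -/

section ShuffleEval
variable (A B P Q R S : Type*)
  [AddCommGroup A] [Module k A] [AddCommGroup B] [Module k B]
  [AddCommGroup P] [Module k P] [AddCommGroup Q] [Module k Q]
  [AddCommGroup R] [Module k R] [AddCommGroup S] [Module k S]

@[simp] theorem sweedlerShuffle_tmul (a : A) (b : B) (p : P) (q : Q) (r : R) (s : S) :
    sweedlerShuffle k A B P Q R S ((a ⊗ₜ b) ⊗ₜ ((p ⊗ₜ q) ⊗ₜ (r ⊗ₜ s))) =
      (a ⊗ₜ (q ⊗ₜ r)) ⊗ₜ (b ⊗ₜ (p ⊗ₜ s)) := by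
  simp [sweedlerShuffle]

@[simp] theorem rbShuffle_tmul (a : A) (p : P) (q : Q) (r : R) :
    rbShuffle k A P Q R (a ⊗ₜ (p ⊗ₜ (q ⊗ₜ r))) = (a ⊗ₜ (r ⊗ₜ p)) ⊗ₜ q := by
  simp [rbShuffle]

end ShuffleEval

/-- extensionality for maps out of `A ⊗ (B ⊗ C)` -/
theorem ext3' {A B C D : Type*} [AddCommGroup A] [Module k A] [AddCommGroup B] [Module k B]
    [AddCommGroup C] [Module k C] [AddCommGroup D] [Module k D]
    {f g : (A ⊗[k] (B ⊗[k] C)) →ₗ[k] D}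
    (h : ∀ a b c, f (a ⊗ₜ (b ⊗ₜ c)) = g (a ⊗ₜ (b ⊗ₜ c))) : f = g := by
  rw [← LinearMap.cancel_right (g := (TensorProduct.assoc k A B C).toLinearMap)
    (TensorProduct.assoc k A B C).surjective]
  exact TensorProduct.ext_threefold (by simpa using h)

/-! ### counit collapse for representations -/

theorem repr_counit_smul_right {c : H} (r : Coalgebra.Repr k c (H × H)) :
    ∑ i ∈ r.index, Coalgebra.counit (R := k) (r.left i) • r.right i = c := by
  have h := congrArg (TensorProduct.lid k H) (Coalgebra.sum_counit_tmul_eq (R := k) r)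
  simp only [map_sum, TensorProduct.lid_tmul, one_smul] at h
  exact h

theorem repr_counit_smul_left {c : H} (r : Coalgebra.Repr k c (H × H)) :
    ∑ i ∈ r.index, Coalgebra.counit (R := k) (r.right i) • r.left i = c := by
  have h := congrArg (TensorProduct.rid k H) (Coalgebra.sum_tmul_counit_eq (R := k) r)
  simp only [map_sum, TensorProduct.rid_tmul, one_smul] at h
  exact h

theorem repr_counit_mul {c : H} (r : Coalgebra.Repr k c (H × H)) :
    ∑ i ∈ r.index,
      Coalgebra.counit (R := k) (r.left i) * Coalgebra.counit (R := k) (r.right i)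
        = Coalgebra.counit (R := k) c := by
  have h := congrArg (Coalgebra.counit (R := k)) (repr_counit_smul_right r)
  simpa [map_sum, smul_eq_mul] using h

/-! ### basic bracket lemmas -/

variable {χ : (H ⊗[k] (H ⊗[k] H)) →ₗ[k] H} {x : H}

theorem br_fold (χ : (H ⊗[k] (H ⊗[k] H)) →ₗ[k] H) (a b c : H) :
    χ (a ⊗ₜ[k] (b ⊗ₜ[k] c)) = br k χ a b c := rfl

theorem br_xxa (hχ : IsHopfHeap k χ) (hx : IsGrouplike k x) (a : H) :
    br k χ x x a = a := by
  have h := hχ.left_cancel x a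
  rw [hx.1, hx.2] at h
  simpa [br] using h

theorem br_axx (hχ : IsHopfHeap k χ) (hx : IsGrouplike k x) (a : H) :
    br k χ a x x = a := by
  have h := hχ.right_cancel x a
  rw [hx.1, hx.2] at h
  simpa [br] using h

theorem sum_br_left (hχ : IsHopfHeap k χ) {c : H} (r : Coalgebra.Repr k c (H × H)) (a : H) :
    ∑ i ∈ r.index, br k χ (r.left i) (r.right i) a
      = Coalgebra.counit (R := k) c • a := by
  have h := hχ.left_cancel c a
  rw [← r.eq] at h
  simpa [br, TensorProduct.sum_tmul, map_sum] using h

theorem sum_br_right (hχ : IsHopfHeap k χ) {c : H} (r : Coalgebra.Repr k c (H × H)) (a : H) :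
    ∑ i ∈ r.index, br k χ a (r.left i) (r.right i)
      = Coalgebra.counit (R := k) c • a := by
  have h := hχ.right_cancel c a
  rw [← r.eq] at h
  simpa [br, TensorProduct.tmul_sum, map_sum] using h

/-! ### the Hopf algebra product and antipode associated to a group-like -/

set_option linter.unusedSectionVars false

/-- the product `a ·ₓ b = [a,x,b]` -/
noncomputable def hmul (χ : (H ⊗[k] (H ⊗[k] H)) →ₗ[k] H) (x a b : H) : H := br k χ a x b

/-- the antipode `σ(a) = [x,a,x]` -/
noncomputable def hinv (χ : (H ⊗[k] (H ⊗[k] H)) →ₗ[k] H) (x a : H) : H := br k χ x a x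

theorem heapMul_tmul (a b : H) : heapMul k χ x (a ⊗ₜ b) = hmul χ x a b := by
  simp [heapMul, hmul, br]

theorem heapAntipode_apply (a : H) : heapAntipode k χ x a = hinv χ x a := by
  simp [heapAntipode, hinv, br]

theorem hmul_sum_left {ι : Type*} (s : Finset ι) (f : ι → H) (b : H) :
    hmul χ x (∑ i ∈ s, f i) b = ∑ i ∈ s, hmul χ x (f i) b := by
  simp [hmul, br, TensorProduct.sum_tmul, map_sum]

theorem hmul_sum_right {ι : Type*} (s : Finset ι) (f : ι → H) (b : H) :
    hmul χ x b (∑ i ∈ s, f i) = ∑ i ∈ s, hmul χ x b (f i) := by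
  simp [hmul, br, TensorProduct.tmul_sum, map_sum]

theorem hmul_smul_left (c : k) (a b : H) : hmul χ x (c • a) b = c • hmul χ x a b := by
  rw [hmul, br, ← TensorProduct.smul_tmul', map_smul]; rfl

theorem hmul_smul_right (c : k) (a b : H) : hmul χ x a (c • b) = c • hmul χ x a b := by
  rw [hmul, br, TensorProduct.tmul_smul, TensorProduct.tmul_smul, map_smul]; rfl

theorem hinv_sum {ι : Type*} (s : Finset ι) (f : ι → H) :
    hinv χ x (∑ i ∈ s, f i) = ∑ i ∈ s, hinv χ x (f i) := by
  simp [hinv, br, TensorProduct.sum_tmul, TensorProduct.tmul_sum, map_sum]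

theorem hinv_smul (c : k) (a : H) : hinv χ x (c • a) = c • hinv χ x a := by
  rw [hinv, br, show (c • a) ⊗ₜ[k] x = c • (a ⊗ₜ[k] x) from TensorProduct.smul_tmul' c a x,
    TensorProduct.tmul_smul, map_smul]; rfl

section HeapAlgebra

variable (hχ : IsHopfHeap k χ) (hcomm : ∀ a b c : H, br k χ a b c = br k χ c b a)
  (hx : IsGrouplike k x)

include hχ hx

theorem hmul_one_left (a : H) : hmul χ x x a = a := br_xxa hχ hx a

theorem hmul_one_right (a : H) : hmul χ x a x = a := br_axx hχ hx a

omit hx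

theorem hmul_assoc (a b c : H) :
    hmul χ x (hmul χ x a b) c = hmul χ x a (hmul χ x b c) := hχ.assoc_br a x b x c

omit hχ
include hcomm

theorem hmul_comm (a b : H) : hmul χ x a b = hmul χ x b a := hcomm a x b

include hχ

theorem hmul_left_comm (a b c : H) :
    hmul χ x a (hmul χ x b c) = hmul χ x b (hmul χ x a c) := by
  rw [← hmul_assoc hχ, hmul_comm hcomm a b, hmul_assoc hχ]

theorem hmul_mul_mul (a b c d : H) :
    hmul χ x (hmul χ x a b) (hmul χ x c d) = hmul χ x (hmul χ x a c) (hmul χ x b d) := by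
  rw [hmul_assoc hχ, hmul_left_comm hχ hcomm b c, ← hmul_assoc hχ]

omit hcomm
include hx

theorem br_eq_hmul (a b c : H) :
    br k χ a b c = hmul χ x (hmul χ x a (hinv χ x b)) c := by
  show _ = br k χ (br k χ a x (br k χ x b x)) x c
  rw [hχ.assoc_br a x (br k χ x b x) x c, hχ.assoc_br x b x x c, br_xxa hχ hx,
    ← hχ.assoc_br a x x b c, br_axx hχ hx]

theorem hinv_x : hinv χ x x = x := br_xxa hχ hx x

theorem sum_hinv_hmul {c : H} (r : Coalgebra.Repr k c (H × H)) :
    ∑ i ∈ r.index, hmul χ x (hinv χ x (r.left i)) (r.right i)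
      = Coalgebra.counit (R := k) c • x := by
  have h : ∀ i, hmul χ x (hinv χ x (r.left i)) (r.right i)
      = br k χ x (r.left i) (r.right i) := by
    intro i
    show br k χ (br k χ x (r.left i) x) x (r.right i) = _
    rw [hχ.assoc_br x (r.left i) x x (r.right i), br_xxa hχ hx]
  rw [Finset.sum_congr rfl (fun i _ => h i)]
  exact sum_br_right hχ r x

theorem sum_hmul_hinv {c : H} (r : Coalgebra.Repr k c (H × H)) :
    ∑ i ∈ r.index, hmul χ x (r.left i) (hinv χ x (r.right i))
      = Coalgebra.counit (R := k) c • x := by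
  have h : ∀ i, hmul χ x (r.left i) (hinv χ x (r.right i))
      = br k χ (r.left i) (r.right i) x := by
    intro i
    show br k χ (r.left i) x (br k χ x (r.right i) x) = _
    rw [← hχ.assoc_br (r.left i) x x (r.right i) x, br_axx hχ hx]
  rw [Finset.sum_congr rfl (fun i _ => h i)]
  exact sum_br_left hχ r x

theorem counit_hmul (a b : H) :
    Coalgebra.counit (R := k) (hmul χ x a b)
      = Coalgebra.counit (R := k) a * Coalgebra.counit (R := k) b := by
  rw [hmul, hχ.counit_br, hx.2, mul_one]

theorem counit_hinv (a : H) :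
    Coalgebra.counit (R := k) (hinv χ x a) = Coalgebra.counit (R := k) a := by
  rw [hinv, hχ.counit_br, hx.2, one_mul, mul_one]

end HeapAlgebra

/-! ### comultiplication and counit on `H ⊗ H`, and of products -/

noncomputable def comulHH : (H ⊗[k] H) →ₗ[k] ((H ⊗[k] H) ⊗[k] (H ⊗[k] H)) :=
  (tensorTensorTensorComm k H H H H).toLinearMap ∘ₗ
    TensorProduct.map (Coalgebra.comul (R := k)) (Coalgebra.comul (R := k))

noncomputable def counitHH : (H ⊗[k] H) →ₗ[k] k :=
  (LinearMap.mul' k k) ∘ₗ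
    TensorProduct.map (Coalgebra.counit (R := k)) (Coalgebra.counit (R := k))

theorem counitHH_tmul (y z : H) :
    counitHH (y ⊗ₜ[k] z) = Coalgebra.counit (R := k) y * Coalgebra.counit (R := k) z := by
  simp [counitHH]

theorem comulHH_repr (y z : H) (ry : Coalgebra.Repr k y (H × H)) (rz : Coalgebra.Repr k z (H × H)) :
    comulHH (y ⊗ₜ[k] z) = ∑ i ∈ ry.index, ∑ j ∈ rz.index,
      (ry.left i ⊗ₜ[k] rz.left j) ⊗ₜ[k] (ry.right i ⊗ₜ[k] rz.right j) := by
  simp only [comulHH, LinearMap.comp_apply, LinearEquiv.coe_coe, TensorProduct.map_tmul]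
  rw [← ry.eq, ← rz.eq]
  simp only [TensorProduct.sum_tmul, TensorProduct.tmul_sum, map_sum,
    tensorTensorTensorComm_tmul]
  rw [Finset.sum_comm]

theorem comul_heapMul_aux (hχ : IsHopfHeap k χ) (hx : IsGrouplike k x) :
    (TensorProduct.map χ χ) ∘ₗ (sweedlerShuffle k H H H H H H) ∘ₗ
      (TensorProduct.map LinearMap.id
        (TensorProduct.mk k (H ⊗[k] H) (H ⊗[k] H) (x ⊗ₜ x)))
      = (TensorProduct.map (heapMul k χ x) (heapMul k χ x)) ∘ₗ
        (tensorTensorTensorComm k H H H H).toLinearMap := by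
  apply TensorProduct.ext_fourfold'
  intro a b c d
  simp [heapMul, br]

theorem comul_heapMul (hχ : IsHopfHeap k χ) (hx : IsGrouplike k x) :
    (Coalgebra.comul (R := k)) ∘ₗ heapMul k χ x
      = (TensorProduct.map (heapMul k χ x) (heapMul k χ x)) ∘ₗ comulHH := by
  apply TensorProduct.ext'
  intro y z
  have h := hχ.comul_br y x z
  rw [hx.1] at h
  have haux := LinearMap.congr_fun (comul_heapMul_aux hχ hx)
    ((Coalgebra.comul (R := k) y) ⊗ₜ[k] (Coalgebra.comul (R := k) z))
  simp only [LinearMap.comp_apply, TensorProduct.map_tmul, LinearMap.id_apply,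
    TensorProduct.mk_apply, LinearEquiv.coe_coe] at haux ⊢
  rw [heapMul_tmul, hmul, h, haux, comulHH, LinearMap.comp_apply]
  simp

theorem comul_hmul_repr (hχ : IsHopfHeap k χ) (hx : IsGrouplike k x) (y z : H)
    (ry : Coalgebra.Repr k y (H × H)) (rz : Coalgebra.Repr k z (H × H)) :
    Coalgebra.comul (R := k) (hmul χ x y z) = ∑ i ∈ ry.index, ∑ j ∈ rz.index,
      hmul χ x (ry.left i) (rz.left j) ⊗ₜ[k] hmul χ x (ry.right i) (rz.right j) := by
  have h := LinearMap.congr_fun (comul_heapMul hχ hx) (y ⊗ₜ[k] z)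
  simp only [LinearMap.comp_apply, heapMul_tmul] at h
  rw [h, comulHH_repr y z ry rz]
  simp [map_sum, heapMul_tmul]

theorem comul_hinv_repr (hχ : IsHopfHeap k χ) (hx : IsGrouplike k x) (a : H)
    (ra : Coalgebra.Repr k a (H × H)) :
    Coalgebra.comul (R := k) (hinv χ x a) = ∑ i ∈ ra.index,
      hinv χ x (ra.right i) ⊗ₜ[k] hinv χ x (ra.left i) := by
  have h := hχ.comul_br x a x
  rw [hx.1, ← ra.eq] at h
  simpa [hinv, br, TensorProduct.sum_tmul, TensorProduct.tmul_sum, map_sum] using h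

theorem counit_heapMul (hχ : IsHopfHeap k χ) (hx : IsGrouplike k x) :
    (Coalgebra.counit (R := k)) ∘ₗ heapMul k χ x = counitHH := by
  apply TensorProduct.ext'
  intro y z
  simp only [LinearMap.comp_apply, heapMul_tmul, counitHH_tmul]
  exact counit_hmul hχ hx y z

/-! ### coassociativity and counit laws for `comulHH` -/

theorem coassocHH (t : H ⊗[k] H) :
    (TensorProduct.assoc k _ _ _).symm
        ((comulHH.lTensor (H ⊗[k] H)) (comulHH t))
      = (comulHH.rTensor (H ⊗[k] H)) (comulHH t) := by
  induction t using TensorProduct.induction_on with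
  | zero => simp
  | add u v hu hv => simp only [map_add, hu, hv]
  | tmul y z =>
    set ry := Coalgebra.Repr.arbitrary k y
    set rz := Coalgebra.Repr.arbitrary k z
    set ry1 : ∀ i : H × H, Coalgebra.Repr k (ry.left i) (H × H) :=
      fun i => Coalgebra.Repr.arbitrary k (ry.left i)
    set ry2 : ∀ i : H × H, Coalgebra.Repr k (ry.right i) (H × H) :=
      fun i => Coalgebra.Repr.arbitrary k (ry.right i)
    set rz1 : ∀ i : H × H, Coalgebra.Repr k (rz.left i) (H × H) :=
      fun i => Coalgebra.Repr.arbitrary k (rz.left i)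
    set rz2 : ∀ i : H × H, Coalgebra.Repr k (rz.right i) (H × H) :=
      fun i => Coalgebra.Repr.arbitrary k (rz.right i)
    have hty := Coalgebra.sum_tmul_tmul_eq (R := k) ry ry1 ry2
    have htz := Coalgebra.sum_tmul_tmul_eq (R := k) rz rz1 rz2
    set Φ : ((H ⊗[k] (H ⊗[k] H)) ⊗[k] (H ⊗[k] (H ⊗[k] H))) →ₗ[k]
        (((H ⊗[k] H) ⊗[k] (H ⊗[k] H)) ⊗[k] (H ⊗[k] H)) :=
      (TensorProduct.assoc k (H ⊗[k] H) (H ⊗[k] H) (H ⊗[k] H)).symm.toLinearMap ∘ₗ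
        (TensorProduct.map LinearMap.id
          (tensorTensorTensorComm k H H H H).toLinearMap) ∘ₗ
        (tensorTensorTensorComm k H (H ⊗[k] H) H (H ⊗[k] H)).toLinearMap with hΦ
    have hΦt : ∀ (a b c d e f : H),
        Φ ((a ⊗ₜ (b ⊗ₜ c)) ⊗ₜ (d ⊗ₜ (e ⊗ₜ f)))
          = ((a ⊗ₜ d) ⊗ₜ (b ⊗ₜ e)) ⊗ₜ (c ⊗ₜ f) := by
      intro a b c d e f
      simp [hΦ]
    have hL : (TensorProduct.assoc k _ _ _).symm
        ((comulHH.lTensor (H ⊗[k] H)) (comulHH (y ⊗ₜ[k] z)))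
        = ∑ i ∈ ry.index, ∑ j ∈ rz.index, ∑ a ∈ (ry2 i).index, ∑ b ∈ (rz2 j).index,
            ((ry.left i ⊗ₜ[k] rz.left j) ⊗ₜ[k] ((ry2 i).left a ⊗ₜ[k] (rz2 j).left b))
              ⊗ₜ[k] ((ry2 i).right a ⊗ₜ[k] (rz2 j).right b) := by
      rw [comulHH_repr y z ry rz]
      simp only [map_sum, LinearMap.lTensor_tmul]
      refine Finset.sum_congr rfl fun i _ => Finset.sum_congr rfl fun j _ => ?_
      rw [comulHH_repr _ _ (ry2 i) (rz2 j)]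
      simp only [TensorProduct.tmul_sum, map_sum]
      simp
    have hR : (comulHH.rTensor (H ⊗[k] H)) (comulHH (y ⊗ₜ[k] z))
        = ∑ i ∈ ry.index, ∑ j ∈ rz.index, ∑ a ∈ (ry1 i).index, ∑ b ∈ (rz1 j).index,
            (((ry1 i).left a ⊗ₜ[k] (rz1 j).left b) ⊗ₜ[k] ((ry1 i).right a ⊗ₜ[k] (rz1 j).right b))
              ⊗ₜ[k] (ry.right i ⊗ₜ[k] rz.right j) := by
      rw [comulHH_repr y z ry rz]
      simp only [map_sum, LinearMap.rTensor_tmul]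
      refine Finset.sum_congr rfl fun i _ => Finset.sum_congr rfl fun j _ => ?_
      rw [comulHH_repr _ _ (ry1 i) (rz1 j)]
      simp only [TensorProduct.sum_tmul, map_sum]
    have e1 : Φ ((∑ i ∈ ry.index, ∑ a ∈ (ry2 i).index,
            ry.left i ⊗ₜ[k] ((ry2 i).left a ⊗ₜ[k] (ry2 i).right a)) ⊗ₜ[k]
          (∑ j ∈ rz.index, ∑ b ∈ (rz2 j).index,
            rz.left j ⊗ₜ[k] ((rz2 j).left b ⊗ₜ[k] (rz2 j).right b)))
        = ∑ i ∈ ry.index, ∑ j ∈ rz.index, ∑ a ∈ (ry2 i).index, ∑ b ∈ (rz2 j).index,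
            ((ry.left i ⊗ₜ[k] rz.left j) ⊗ₜ[k] ((ry2 i).left a ⊗ₜ[k] (rz2 j).left b))
              ⊗ₜ[k] ((ry2 i).right a ⊗ₜ[k] (rz2 j).right b) := by
      simp only [TensorProduct.sum_tmul]
      simp only [TensorProduct.tmul_sum]
      simp only [map_sum, Finset.sum_apply, LinearMap.coe_sum]
      simp only [hΦt]
      exact Finset.sum_congr rfl fun i _ => Finset.sum_comm
    have e2 : Φ ((∑ i ∈ ry.index, ∑ a ∈ (ry1 i).index,
            (ry1 i).left a ⊗ₜ[k] ((ry1 i).right a ⊗ₜ[k] ry.right i)) ⊗ₜ[k]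
          (∑ j ∈ rz.index, ∑ b ∈ (rz1 j).index,
            (rz1 j).left b ⊗ₜ[k] ((rz1 j).right b ⊗ₜ[k] rz.right j)))
        = ∑ i ∈ ry.index, ∑ j ∈ rz.index, ∑ a ∈ (ry1 i).index, ∑ b ∈ (rz1 j).index,
            (((ry1 i).left a ⊗ₜ[k] (rz1 j).left b) ⊗ₜ[k] ((ry1 i).right a ⊗ₜ[k] (rz1 j).right b))
              ⊗ₜ[k] (ry.right i ⊗ₜ[k] rz.right j) := by
      simp only [TensorProduct.sum_tmul]
      simp only [TensorProduct.tmul_sum]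
      simp only [map_sum, Finset.sum_apply, LinearMap.coe_sum]
      simp only [hΦt]
      exact Finset.sum_congr rfl fun i _ => Finset.sum_comm
    rw [hL, hR, ← e1, ← e2, hty, htz]

theorem counitHH_left (t : H ⊗[k] H) :
    (TensorProduct.lid k (H ⊗[k] H)) ((counitHH.rTensor (H ⊗[k] H)) (comulHH t)) = t := by
  induction t using TensorProduct.induction_on with
  | zero => simp
  | add u v hu hv => simp only [map_add, hu, hv]
  | tmul y z =>
    set ry := Coalgebra.Repr.arbitrary k y
    set rz := Coalgebra.Repr.arbitrary k z
    rw [comulHH_repr y z ry rz]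
    simp only [map_sum, LinearMap.rTensor_tmul, counitHH_tmul, TensorProduct.lid_tmul]
    conv_rhs => rw [← repr_counit_smul_right ry, ← repr_counit_smul_right rz]
    rw [TensorProduct.sum_tmul]
    refine Finset.sum_congr rfl fun i _ => ?_
    rw [TensorProduct.tmul_sum]
    refine Finset.sum_congr rfl fun j _ => ?_
    simp [TensorProduct.smul_tmul', smul_smul, mul_comm]

theorem counitHH_right (t : H ⊗[k] H) :
    (TensorProduct.rid k (H ⊗[k] H)) ((counitHH.lTensor (H ⊗[k] H)) (comulHH t)) = t := by
  induction t using TensorProduct.induction_on with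
  | zero => simp
  | add u v hu hv => simp only [map_add, hu, hv]
  | tmul y z =>
    set ry := Coalgebra.Repr.arbitrary k y
    set rz := Coalgebra.Repr.arbitrary k z
    rw [comulHH_repr y z ry rz]
    simp only [map_sum, LinearMap.lTensor_tmul, counitHH_tmul, TensorProduct.rid_tmul]
    conv_rhs => rw [← repr_counit_smul_left ry, ← repr_counit_smul_left rz]
    rw [TensorProduct.sum_tmul]
    refine Finset.sum_congr rfl fun i _ => ?_
    rw [TensorProduct.tmul_sum]
    refine Finset.sum_congr rfl fun j _ => ?_
    simp [TensorProduct.smul_tmul', smul_smul, mul_comm]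

/-! ### convolution machinery -/

section Conv

variable {C : Type*} [AddCommGroup C] [Module k C]
variable (χ : (H ⊗[k] (H ⊗[k] H)) →ₗ[k] H) (x : H)
variable (Δc : C →ₗ[k] C ⊗[k] C) (εc : C →ₗ[k] k)

/-- convolution product of linear maps into `H`, with respect to the product `[·,x,·]` -/
noncomputable def conv (f g : C →ₗ[k] H) : C →ₗ[k] H :=
  heapMul k χ x ∘ₗ TensorProduct.map f g ∘ₗ Δc

/-- convolution unit -/
noncomputable def etaC : C →ₗ[k] H := (LinearMap.toSpanSingleton k H x) ∘ₗ εc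

theorem conv_assoc (hχ : IsHopfHeap k χ)
    (hco : ∀ c : C, (TensorProduct.assoc k C C C).symm ((Δc.lTensor C) (Δc c))
      = (Δc.rTensor C) (Δc c)) (f g h : C →ₗ[k] H) :
    conv χ x Δc (conv χ x Δc f g) h = conv χ x Δc f (conv χ x Δc g h) := by
  have e1 : TensorProduct.map (conv χ x Δc f g) h
      = (TensorProduct.map ((heapMul k χ x) ∘ₗ TensorProduct.map f g) h) ∘ₗ (Δc.rTensor C) :=
    TensorProduct.ext' (by intro a b; simp [conv])
  have e2 : TensorProduct.map f (conv χ x Δc g h)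
      = (TensorProduct.map f ((heapMul k χ x) ∘ₗ TensorProduct.map g h)) ∘ₗ (Δc.lTensor C) :=
    TensorProduct.ext' (by intro a b; simp [conv])
  have key : ∀ t : (C ⊗[k] (C ⊗[k] C)),
      heapMul k χ x ((TensorProduct.map ((heapMul k χ x) ∘ₗ TensorProduct.map f g) h)
        ((TensorProduct.assoc k C C C).symm t))
      = heapMul k χ x ((TensorProduct.map f ((heapMul k χ x) ∘ₗ TensorProduct.map g h)) t) := by
    intro t
    induction t using TensorProduct.induction_on with
    | zero => simp
    | add u v hu hv => simp only [map_add, hu, hv]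
    | tmul c1 t2 =>
      induction t2 using TensorProduct.induction_on with
      | zero => simp
      | add u v hu hv => simp only [TensorProduct.tmul_add, map_add, hu, hv]
      | tmul c2 c3 =>
        simp only [TensorProduct.assoc_symm_tmul, TensorProduct.map_tmul,
          LinearMap.comp_apply, heapMul_tmul]
        exact hmul_assoc hχ (f c1) (g c2) (h c3)
  apply LinearMap.ext; intro c
  show heapMul k χ x ((TensorProduct.map (conv χ x Δc f g) h) (Δc c))
      = heapMul k χ x ((TensorProduct.map f (conv χ x Δc g h)) (Δc c))
  rw [e1, e2]
  simp only [LinearMap.comp_apply]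
  rw [← hco c]
  exact key _

theorem conv_eta_left (hχ : IsHopfHeap k χ) (hx : IsGrouplike k x)
    (hL : ∀ c : C, (TensorProduct.lid k C) ((εc.rTensor C) (Δc c)) = c)
    (f : C →ₗ[k] H) : conv χ x Δc (etaC x εc) f = f := by
  apply LinearMap.ext; intro c
  have key : ∀ t : C ⊗[k] C,
      heapMul k χ x ((TensorProduct.map (etaC x εc) f) t)
        = f ((TensorProduct.lid k C) ((εc.rTensor C) t)) := by
    intro t
    induction t using TensorProduct.induction_on with
    | zero => simp
    | add u v hu hv => simp only [map_add, hu, hv]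
    | tmul c1 c2 =>
      simp only [TensorProduct.map_tmul, LinearMap.rTensor_tmul, TensorProduct.lid_tmul,
        map_smul, etaC, LinearMap.comp_apply, LinearMap.toSpanSingleton_apply]
      rw [heapMul_tmul, hmul_smul_left, hmul_one_left hχ hx]
  simp only [conv, LinearMap.comp_apply, key, hL]

theorem conv_eta_right (hχ : IsHopfHeap k χ) (hx : IsGrouplike k x)
    (hR : ∀ c : C, (TensorProduct.rid k C) ((εc.lTensor C) (Δc c)) = c)
    (f : C →ₗ[k] H) : conv χ x Δc f (etaC x εc) = f := by
  apply LinearMap.ext; intro c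
  have key : ∀ t : C ⊗[k] C,
      heapMul k χ x ((TensorProduct.map f (etaC x εc)) t)
        = f ((TensorProduct.rid k C) ((εc.lTensor C) t)) := by
    intro t
    induction t using TensorProduct.induction_on with
    | zero => simp
    | add u v hu hv => simp only [map_add, hu, hv]
    | tmul c1 c2 =>
      simp only [TensorProduct.map_tmul, LinearMap.lTensor_tmul, TensorProduct.rid_tmul,
        map_smul, etaC, LinearMap.comp_apply, LinearMap.toSpanSingleton_apply]
      rw [heapMul_tmul, hmul_smul_right, hmul_one_right hχ hx]
  simp only [conv, LinearMap.comp_apply, key, hR]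

theorem conv_inv_unique (hχ : IsHopfHeap k χ) (hx : IsGrouplike k x)
    (hco : ∀ c : C, (TensorProduct.assoc k C C C).symm ((Δc.lTensor C) (Δc c))
      = (Δc.rTensor C) (Δc c))
    (hL : ∀ c : C, (TensorProduct.lid k C) ((εc.rTensor C) (Δc c)) = c)
    (hR : ∀ c : C, (TensorProduct.rid k C) ((εc.lTensor C) (Δc c)) = c)
    (f a b : C →ₗ[k] H)
    (h1 : conv χ x Δc a f = etaC x εc) (h2 : conv χ x Δc f b = etaC x εc) : a = b := by
  calc a = conv χ x Δc a (etaC x εc) := (conv_eta_right χ x Δc εc hχ hx hR a).symm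
    _ = conv χ x Δc a (conv χ x Δc f b) := by rw [h2]
    _ = conv χ x Δc (conv χ x Δc a f) b := (conv_assoc χ x Δc hχ hco a f b).symm
    _ = conv χ x Δc (etaC x εc) b := by rw [h1]
    _ = b := conv_eta_left χ x Δc εc hχ hx hL b

end Conv
set_option maxHeartbeats 1000000

/-! ### antipode properties -/

theorem hLH : ∀ c : H, (TensorProduct.lid k H)
    (((Coalgebra.counit (R := k)).rTensor H) (Coalgebra.comul c)) = c := by
  intro c; rw [Coalgebra.rTensor_counit_comul]; simp

theorem hRH : ∀ c : H, (TensorProduct.rid k H)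
    (((Coalgebra.counit (R := k)).lTensor H) (Coalgebra.comul c)) = c := by
  intro c; rw [Coalgebra.lTensor_counit_comul]; simp

theorem conv_hinv_id (hχ : IsHopfHeap k χ) (hx : IsGrouplike k x) :
    conv χ x (Coalgebra.comul (R := k)) (heapAntipode k χ x) LinearMap.id
      = etaC x (Coalgebra.counit (R := k)) := by
  apply LinearMap.ext; intro c
  show heapMul k χ x ((TensorProduct.map (heapAntipode k χ x) LinearMap.id)
    (Coalgebra.comul c)) = _
  set r := Coalgebra.Repr.arbitrary k c
  rw [← r.eq]
  simp only [map_sum, TensorProduct.map_tmul, LinearMap.id_apply, heapMul_tmul,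
    heapAntipode_apply]
  rw [sum_hinv_hmul hχ hx r]
  simp [etaC]

theorem conv_id_hinv (hχ : IsHopfHeap k χ) (hx : IsGrouplike k x) :
    conv χ x (Coalgebra.comul (R := k)) LinearMap.id (heapAntipode k χ x)
      = etaC x (Coalgebra.counit (R := k)) := by
  apply LinearMap.ext; intro c
  show heapMul k χ x ((TensorProduct.map LinearMap.id (heapAntipode k χ x))
    (Coalgebra.comul c)) = _
  set r := Coalgebra.Repr.arbitrary k c
  rw [← r.eq]
  simp only [map_sum, TensorProduct.map_tmul, LinearMap.id_apply, heapMul_tmul,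
    heapAntipode_apply]
  rw [sum_hmul_hinv hχ hx r]
  simp [etaC]

theorem conv_heapMul_right (hχ : IsHopfHeap k χ) (hx : IsGrouplike k x) :
    conv χ x comulHH (heapMul k χ x) ((heapAntipode k χ x) ∘ₗ heapMul k χ x)
      = etaC x counitHH := by
  have e : TensorProduct.map (heapMul k χ x) ((heapAntipode k χ x) ∘ₗ heapMul k χ x)
      = (TensorProduct.map LinearMap.id (heapAntipode k χ x)) ∘ₗ
          (TensorProduct.map (heapMul k χ x) (heapMul k χ x)) := by
    rw [← TensorProduct.map_comp, LinearMap.id_comp]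
  apply LinearMap.ext; intro t
  show heapMul k χ x ((TensorProduct.map (heapMul k χ x)
    ((heapAntipode k χ x) ∘ₗ heapMul k χ x)) (comulHH t)) = _
  rw [e]
  simp only [LinearMap.comp_apply]
  have e2 : (TensorProduct.map (heapMul k χ x) (heapMul k χ x)) (comulHH t)
      = Coalgebra.comul (R := k) (heapMul k χ x t) := by
    have h' := LinearMap.congr_fun (comul_heapMul hχ hx) t
    simp only [LinearMap.comp_apply] at h'
    exact h'.symm
  rw [e2]
  have h3 := LinearMap.congr_fun (conv_id_hinv hχ hx) (heapMul k χ x t)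
  simp only [conv, LinearMap.comp_apply] at h3
  rw [h3]
  have h4 := LinearMap.congr_fun (counit_heapMul hχ hx) t
  simp only [LinearMap.comp_apply] at h4
  simp [etaC, h4]

theorem conv_heapMul_left (hχ : IsHopfHeap k χ)
    (hcomm : ∀ a b c : H, br k χ a b c = br k χ c b a) (hx : IsGrouplike k x) :
    conv χ x comulHH
      ((heapMul k χ x) ∘ₗ TensorProduct.map (heapAntipode k χ x) (heapAntipode k χ x))
      (heapMul k χ x) = etaC x counitHH := by
  apply TensorProduct.ext'; intro y z
  show heapMul k χ x ((TensorProduct.map _ _) (comulHH (y ⊗ₜ z))) = _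
  set ry := Coalgebra.Repr.arbitrary k y
  set rz := Coalgebra.Repr.arbitrary k z
  rw [comulHH_repr y z ry rz]
  simp only [map_sum, TensorProduct.map_tmul, LinearMap.comp_apply, heapMul_tmul,
    heapAntipode_apply]
  have step : ∀ i ∈ ry.index, ∀ j ∈ rz.index,
      hmul χ x (hmul χ x (hinv χ x (ry.left i)) (hinv χ x (rz.left j)))
        (hmul χ x (ry.right i) (rz.right j))
      = hmul χ x (hmul χ x (hinv χ x (ry.left i)) (ry.right i))
          (hmul χ x (hinv χ x (rz.left j)) (rz.right j)) := by
    intro i _ j _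
    exact hmul_mul_mul hχ hcomm _ _ _ _
  rw [Finset.sum_congr rfl (fun i hi => Finset.sum_congr rfl (fun j hj => step i hi j hj))]
  have inner : ∀ i ∈ ry.index,
      ∑ j ∈ rz.index, hmul χ x (hmul χ x (hinv χ x (ry.left i)) (ry.right i))
          (hmul χ x (hinv χ x (rz.left j)) (rz.right j))
      = Coalgebra.counit (R := k) z •
          hmul χ x (hmul χ x (hinv χ x (ry.left i)) (ry.right i)) x := by
    intro i _
    rw [← hmul_sum_right, sum_hinv_hmul hχ hx rz, hmul_smul_right]
  rw [Finset.sum_congr rfl inner, ← Finset.smul_sum, ← hmul_sum_left,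
    sum_hinv_hmul hχ hx ry, hmul_smul_left]
  simp only [etaC, LinearMap.comp_apply, LinearMap.toSpanSingleton_apply, counitHH_tmul]
  rw [hmul_one_right hχ hx x, smul_smul, mul_comm]

theorem hinv_hmul (hχ : IsHopfHeap k χ)
    (hcomm : ∀ a b c : H, br k χ a b c = br k χ c b a) (hx : IsGrouplike k x) (y z : H) :
    hinv χ x (hmul χ x y z) = hmul χ x (hinv χ x y) (hinv χ x z) := by
  have huniq := conv_inv_unique (C := H ⊗[k] H) χ x comulHH counitHH hχ hx coassocHH
    counitHH_left counitHH_right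
    (heapMul k χ x)
    ((heapMul k χ x) ∘ₗ TensorProduct.map (heapAntipode k χ x) (heapAntipode k χ x))
    ((heapAntipode k χ x) ∘ₗ heapMul k χ x)
    (conv_heapMul_left hχ hcomm hx) (conv_heapMul_right hχ hx)
  have h := LinearMap.congr_fun huniq (y ⊗ₜ z)
  simp only [LinearMap.comp_apply, TensorProduct.map_tmul, heapMul_tmul,
    heapAntipode_apply] at h
  exact h.symm

theorem hinv_hinv (hχ : IsHopfHeap k χ)
    (hcomm : ∀ a b c : H, br k χ a b c = br k χ c b a) (hx : IsGrouplike k x) (a : H) :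
    hinv χ x (hinv χ x a) = a := by
  have h1 : conv χ x (Coalgebra.comul (R := k))
      ((heapAntipode k χ x) ∘ₗ (heapAntipode k χ x)) (heapAntipode k χ x)
      = etaC x (Coalgebra.counit (R := k)) := by
    apply LinearMap.ext; intro c
    show heapMul k χ x ((TensorProduct.map _ _) (Coalgebra.comul c)) = _
    set r := Coalgebra.Repr.arbitrary k c
    rw [← r.eq]
    simp only [map_sum, TensorProduct.map_tmul, LinearMap.comp_apply, heapMul_tmul,
      heapAntipode_apply]
    have step : ∀ i ∈ r.index,
        hmul χ x (hinv χ x (hinv χ x (r.left i))) (hinv χ x (r.right i))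
          = hinv χ x (hmul χ x (hinv χ x (r.left i)) (r.right i)) := by
      intro i _
      rw [hinv_hmul hχ hcomm hx]
    rw [Finset.sum_congr rfl step, ← hinv_sum, sum_hinv_hmul hχ hx r, hinv_smul,
      hinv_x hχ hx]
    simp [etaC]
  have h2 := conv_hinv_id hχ hx
  have huniq := conv_inv_unique χ x (Coalgebra.comul (R := k)) (Coalgebra.counit (R := k))
    hχ hx (fun c => Coalgebra.coassoc_symm_apply c) hLH hRH
    (heapAntipode k χ x) ((heapAntipode k χ x) ∘ₗ (heapAntipode k χ x)) LinearMap.id h1 h2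
  have h := LinearMap.congr_fun huniq a
  simp only [LinearMap.comp_apply, LinearMap.id_apply, heapAntipode_apply] at h
  exact h

/-! ### the key middle-cancellation identity -/

theorem claimI (hχ : IsHopfHeap k χ)
    (hcomm : ∀ a b c : H, br k χ a b c = br k χ c b a) (hx : IsGrouplike k x)
    (p q w : H) {c : H} (r : Coalgebra.Repr k c (H × H)) :
    ∑ i ∈ r.index, br k χ (r.left i) (br k χ (r.right i) p q) w
      = Coalgebra.counit (R := k) c • br k χ p q w := by
  have key : ∀ i ∈ r.index, br k χ (r.left i) (br k χ (r.right i) p q) w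
      = hmul χ x (hmul χ x (r.left i) (hinv χ x (r.right i)))
          (hmul χ x (hmul χ x p (hinv χ x q)) w) := by
    intro i _
    rw [br_eq_hmul hχ hx (r.left i) _ w, br_eq_hmul hχ hx (r.right i) p q,
      hinv_hmul hχ hcomm hx, hinv_hmul hχ hcomm hx, hinv_hinv hχ hcomm hx]
    simp only [hmul_assoc hχ]
  rw [Finset.sum_congr rfl key, ← hmul_sum_left, sum_hmul_hinv hχ hx r, hmul_smul_left,
    hmul_one_left hχ hx, ← br_eq_hmul hχ hx]

/-! ### module side -/

section ModuleSide

variable {M : Type*} [AddCommGroup M] [Module k M]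

theorem psi_tmul_sum (ψ : (M ⊗[k] (H ⊗[k] H)) →ₗ[k] M) (m : M) {ι : Type*} (s : Finset ι)
    (f : ι → H ⊗[k] H) :
    ψ (m ⊗ₜ (∑ i ∈ s, f i)) = ∑ i ∈ s, ψ (m ⊗ₜ f i) := by
  rw [TensorProduct.tmul_sum, map_sum]

theorem psi_sum_tmul (ψ : (M ⊗[k] (H ⊗[k] H)) →ₗ[k] M) {ι : Type*} (s : Finset ι)
    (f : ι → M) (Y : H ⊗[k] H) :
    ψ ((∑ i ∈ s, f i) ⊗ₜ Y) = ∑ i ∈ s, ψ (f i ⊗ₜ Y) := by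
  rw [TensorProduct.sum_tmul, map_sum]

variable {ψ : (M ⊗[k] (H ⊗[k] H)) →ₗ[k] M}

/-- `c ↦ ψ (m ⊗ (c₂ ⊗ c₁))` as a linear map -/
noncomputable def gswap (ψ : (M ⊗[k] (H ⊗[k] H)) →ₗ[k] M) (m : M) : H →ₗ[k] M :=
  ψ ∘ₗ (TensorProduct.mk k M (H ⊗[k] H) m) ∘ₗ (TensorProduct.comm k H H).toLinearMap ∘ₗ
    (Coalgebra.comul (R := k))

theorem gswap_repr (m : M) {c : H} (r : Coalgebra.Repr k c (H × H)) :
    gswap ψ m c = ∑ i ∈ r.index, ψ (m ⊗ₜ (r.right i ⊗ₜ r.left i)) := by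
  simp only [gswap, LinearMap.comp_apply, LinearEquiv.coe_coe]
  rw [← r.eq]
  simp only [map_sum, TensorProduct.comm_tmul, TensorProduct.mk_apply,
    TensorProduct.tmul_sum]

/-- the opposite comultiplication also acts trivially -/
theorem claimIII (hχ : IsHopfHeap k χ)
    (hcomm : ∀ a b c : H, br k χ a b c = br k χ c b a)
    (hact1 : ∀ (m : M) (a b c d : H),
      ψ (m ⊗ₜ[k] (a ⊗ₜ[k] br k χ b c d)) = ψ (ψ (m ⊗ₜ[k] (a ⊗ₜ[k] b)) ⊗ₜ[k] (c ⊗ₜ[k] d)))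
    (hact2 : ∀ (m : M) (c : H),
      ψ (m ⊗ₜ[k] (Coalgebra.comul (R := k) c)) = Coalgebra.counit (R := k) c • m)
    (m : M) {c : H} (r : Coalgebra.Repr k c (H × H)) :
    ∑ i ∈ r.index, ψ (m ⊗ₜ (r.right i ⊗ₜ r.left i))
      = Coalgebra.counit (R := k) c • m := by
  set rL : ∀ i : H × H, Coalgebra.Repr k (r.left i) (H × H) :=
    fun i => Coalgebra.Repr.arbitrary k (r.left i)
  set rR : ∀ i : H × H, Coalgebra.Repr k (r.right i) (H × H) :=
    fun i => Coalgebra.Repr.arbitrary k (r.right i)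
  set Y : M := ∑ i ∈ r.index, ∑ j ∈ (rL i).index, ∑ l ∈ (rR i).index,
    ψ (m ⊗ₜ ((rL i).left j ⊗ₜ
      br k χ ((rL i).right j) ((rR i).right l) ((rR i).left l))) with hY
  have hA : Y = ∑ i ∈ r.index, ψ (m ⊗ₜ (r.right i ⊗ₜ r.left i)) := by
    rw [hY]
    have inner : ∀ i ∈ r.index, ∑ j ∈ (rL i).index, ∑ l ∈ (rR i).index,
        ψ (m ⊗ₜ ((rL i).left j ⊗ₜ
          br k χ ((rL i).right j) ((rR i).right l) ((rR i).left l)))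
        = Coalgebra.counit (R := k) (r.left i) • gswap ψ m (r.right i) := by
      intro i _
      have swap : ∀ j ∈ (rL i).index, ∀ l ∈ (rR i).index,
          ψ (m ⊗ₜ ((rL i).left j ⊗ₜ
            br k χ ((rL i).right j) ((rR i).right l) ((rR i).left l)))
          = ψ (ψ (m ⊗ₜ ((rL i).left j ⊗ₜ (rL i).right j)) ⊗ₜ
              ((rR i).right l ⊗ₜ (rR i).left l)) :=
        fun j _ l _ => hact1 m _ _ _ _
      rw [Finset.sum_congr rfl (fun j hj => Finset.sum_congr rfl (fun l hl => swap j hj l hl)),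
        Finset.sum_comm]
      have collapse : ∀ l ∈ (rR i).index,
          ∑ j ∈ (rL i).index, ψ (ψ (m ⊗ₜ ((rL i).left j ⊗ₜ (rL i).right j)) ⊗ₜ
              ((rR i).right l ⊗ₜ (rR i).left l))
          = Coalgebra.counit (R := k) (r.left i) •
              ψ (m ⊗ₜ ((rR i).right l ⊗ₜ (rR i).left l)) := by
        intro l _
        rw [← psi_sum_tmul ψ]
        rw [show (∑ j ∈ (rL i).index, ψ (m ⊗ₜ ((rL i).left j ⊗ₜ (rL i).right j)))
            = Coalgebra.counit (R := k) (r.left i) • m by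
          rw [← psi_tmul_sum ψ m, (rL i).eq, hact2]]
        rw [← TensorProduct.smul_tmul', map_smul]
      rw [Finset.sum_congr rfl collapse, ← Finset.smul_sum, gswap_repr m (rR i)]
    rw [Finset.sum_congr rfl inner]
    have lin : ∑ i ∈ r.index, Coalgebra.counit (R := k) (r.left i) • gswap ψ m (r.right i)
        = gswap ψ m c := by
      have h' := congrArg (gswap ψ m) (repr_counit_smul_right r)
      rw [map_sum] at h'
      simp only [map_smul] at h'
      exact h'
    rw [lin, gswap_repr m r]
  have hB : Y = Coalgebra.counit (R := k) c • m := by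
    rw [hY]
    have inner : ∀ i ∈ r.index, ∑ j ∈ (rL i).index, ∑ l ∈ (rR i).index,
        ψ (m ⊗ₜ ((rL i).left j ⊗ₜ
          br k χ ((rL i).right j) ((rR i).right l) ((rR i).left l)))
        = (Coalgebra.counit (R := k) (r.left i) * Coalgebra.counit (R := k) (r.right i)) • m := by
      intro i _
      have step : ∀ j ∈ (rL i).index,
          ∑ l ∈ (rR i).index, ψ (m ⊗ₜ ((rL i).left j ⊗ₜ
            br k χ ((rL i).right j) ((rR i).right l) ((rR i).left l)))
          = Coalgebra.counit (R := k) (r.right i) •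
              ψ (m ⊗ₜ ((rL i).left j ⊗ₜ (rL i).right j)) := by
        intro j _
        have comm1 : ∀ l ∈ (rR i).index,
            ψ (m ⊗ₜ ((rL i).left j ⊗ₜ
              br k χ ((rL i).right j) ((rR i).right l) ((rR i).left l)))
            = ψ (m ⊗ₜ ((rL i).left j ⊗ₜ
              br k χ ((rR i).left l) ((rR i).right l) ((rL i).right j))) := by
          intro l _
          rw [hcomm]
        rw [Finset.sum_congr rfl comm1, ← psi_tmul_sum ψ m, ← TensorProduct.tmul_sum,
          sum_br_left hχ (rR i) ((rL i).right j), TensorProduct.tmul_smul,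
          TensorProduct.tmul_smul, map_smul]
      rw [Finset.sum_congr rfl step, ← Finset.smul_sum,
        show (∑ j ∈ (rL i).index, ψ (m ⊗ₜ ((rL i).left j ⊗ₜ (rL i).right j)))
            = Coalgebra.counit (R := k) (r.left i) • m by
          rw [← psi_tmul_sum ψ m, (rL i).eq, hact2],
        smul_smul, mul_comm]
    rw [Finset.sum_congr rfl inner, ← Finset.sum_smul, repr_counit_mul r]
  rw [← hA, hB]

theorem claimII (hχ : IsHopfHeap k χ)
    (hcomm : ∀ a b c : H, br k χ a b c = br k χ c b a)
    (hact1 : ∀ (m : M) (a b c d : H),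
      ψ (m ⊗ₜ[k] (a ⊗ₜ[k] br k χ b c d)) = ψ (ψ (m ⊗ₜ[k] (a ⊗ₜ[k] b)) ⊗ₜ[k] (c ⊗ₜ[k] d)))
    (hact2 : ∀ (m : M) (c : H),
      ψ (m ⊗ₜ[k] (Coalgebra.comul (R := k) c)) = Coalgebra.counit (R := k) c • m)
    (m : M) (u v : H) {c : H} (r : Coalgebra.Repr k c (H × H)) :
    ∑ i ∈ r.index, ψ (m ⊗ₜ (r.right i ⊗ₜ br k χ (r.left i) u v))
      = Coalgebra.counit (R := k) c • ψ (m ⊗ₜ (u ⊗ₜ v)) := by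
  have step : ∀ i ∈ r.index,
      ψ (m ⊗ₜ (r.right i ⊗ₜ br k χ (r.left i) u v))
        = ψ (ψ (m ⊗ₜ (r.right i ⊗ₜ r.left i)) ⊗ₜ (u ⊗ₜ v)) :=
    fun i _ => hact1 m _ _ _ _
  rw [Finset.sum_congr rfl step, ← psi_sum_tmul ψ,
    claimIII hχ hcomm hact1 hact2 m r, ← TensorProduct.smul_tmul', map_smul]

variable {ρ : M →ₗ[k] M ⊗[k] H} {x : H}

theorem lemC (hχ : IsHopfHeap k χ) (hx : IsGrouplike k x)
    (hact3 : ∀ (m : M) (c d : H),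
      ρ (ψ (m ⊗ₜ[k] (c ⊗ₜ[k] d))) =
        (TensorProduct.map ψ χ) (sweedlerShuffle k M H H H H H
          ((ρ m) ⊗ₜ[k]
            ((Coalgebra.comul (R := k) c) ⊗ₜ[k] (Coalgebra.comul (R := k) d)))))
    (n : M) (hn : ρ n = n ⊗ₜ x) (h : H) :
    ρ (ψ (n ⊗ₜ (x ⊗ₜ h))) =
      (TensorProduct.map
        (ψ ∘ₗ (TensorProduct.mk k M (H ⊗[k] H) n) ∘ₗ (TensorProduct.mk k H H x))
        (LinearMap.id : H →ₗ[k] H)) (Coalgebra.comul (R := k) h) := by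
  rw [hact3 n x h, hn, hx.1]
  set r := Coalgebra.Repr.arbitrary k h
  rw [← r.eq]
  simp only [TensorProduct.sum_tmul, TensorProduct.tmul_sum, map_sum, sweedlerShuffle_tmul,
    TensorProduct.map_tmul, LinearMap.comp_apply, TensorProduct.mk_apply, LinearMap.id_apply]
  refine Finset.sum_congr rfl fun i _ => ?_
  congr 1
  exact br_xxa hχ hx _

theorem lemG (hχ : IsHopfHeap k χ) (hx : IsGrouplike k x)
    (hact1 : ∀ (m : M) (a b c d : H),
      ψ (m ⊗ₜ[k] (a ⊗ₜ[k] br k χ b c d)) = ψ (ψ (m ⊗ₜ[k] (a ⊗ₜ[k] b)) ⊗ₜ[k] (c ⊗ₜ[k] d)))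
    (hact2 : ∀ (m : M) (c : H),
      ψ (m ⊗ₜ[k] (Coalgebra.comul (R := k) c)) = Coalgebra.counit (R := k) c • m)
    (hact3 : ∀ (m : M) (c d : H),
      ρ (ψ (m ⊗ₜ[k] (c ⊗ₜ[k] d))) =
        (TensorProduct.map ψ χ) (sweedlerShuffle k M H H H H H
          ((ρ m) ⊗ₜ[k]
            ((Coalgebra.comul (R := k) c) ⊗ₜ[k] (Coalgebra.comul (R := k) d)))))
    (n : M) (hn : ρ n = n ⊗ₜ x) (h : H) :
    rP x ρ ψ (ψ (n ⊗ₜ (x ⊗ₜ h))) = Coalgebra.counit (R := k) h • n := by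
  show ψ ((TensorProduct.map LinearMap.id ((TensorProduct.mk k H H).flip x))
    (ρ (ψ (n ⊗ₜ (x ⊗ₜ h))))) = _
  rw [lemC hχ hx hact3 n hn h]
  set r := Coalgebra.Repr.arbitrary k h
  rw [← r.eq]
  simp only [map_sum, TensorProduct.map_tmul, LinearMap.comp_apply, TensorProduct.mk_apply,
    LinearMap.id_apply, LinearMap.flip_apply]
  have step : ∀ i ∈ r.index,
      ψ ((ψ (n ⊗ₜ (x ⊗ₜ r.left i))) ⊗ₜ (r.right i ⊗ₜ x))
        = ψ (n ⊗ₜ (x ⊗ₜ br k χ (r.left i) (r.right i) x)) :=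
    fun i _ => (hact1 n x (r.left i) (r.right i) x).symm
  rw [Finset.sum_congr rfl step, ← psi_tmul_sum ψ n, ← TensorProduct.tmul_sum,
    sum_br_left hχ r x, TensorProduct.tmul_smul, TensorProduct.tmul_smul, map_smul]
  have : ψ (n ⊗ₜ (x ⊗ₜ[k] x)) = n := by
    have h2 := hact2 n x
    rw [hx.1, hx.2, one_smul] at h2
    exact h2
  rw [this]

theorem lemE
    (hcoassoc : ∀ m : M, (TensorProduct.assoc k M H H)
        ((TensorProduct.map ρ LinearMap.id) (ρ m)) =
      (TensorProduct.map LinearMap.id (Coalgebra.comul (R := k))) (ρ m))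
    (hcounit : ∀ m : M, (TensorProduct.rid k M)
        ((TensorProduct.map LinearMap.id (Coalgebra.counit (R := k))) (ρ m)) = m)
    (hact2 : ∀ (m : M) (c : H),
      ψ (m ⊗ₜ[k] (Coalgebra.comul (R := k) c)) = Coalgebra.counit (R := k) c • m)
    (w : M) :
    ψ ((TensorProduct.assoc k M H H) ((TensorProduct.map ρ LinearMap.id) (ρ w))) = w := by
  rw [hcoassoc w]
  obtain ⟨S, hS⟩ := TensorProduct.exists_finset (ρ w)
  have hw := hcounit w
  rw [hS] at hw ⊢
  simp only [map_sum, TensorProduct.map_tmul, LinearMap.id_apply,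
    TensorProduct.rid_tmul] at hw ⊢
  rw [Finset.sum_congr rfl (fun i _ => hact2 i.1 i.2)]
  exact hw

theorem lemF (hχ : IsHopfHeap k χ) (hx : IsGrouplike k x)
    (hact1 : ∀ (m : M) (a b c d : H),
      ψ (m ⊗ₜ[k] (a ⊗ₜ[k] br k χ b c d)) = ψ (ψ (m ⊗ₜ[k] (a ⊗ₜ[k] b)) ⊗ₜ[k] (c ⊗ₜ[k] d)))
    (p : M) (u : H) :
    ψ ((rP x ρ ψ p) ⊗ₜ (x ⊗ₜ u))
      = ψ ((TensorProduct.assoc k M H H) ((ρ p) ⊗ₜ u)) := by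
  obtain ⟨S, hS⟩ := TensorProduct.exists_finset (ρ p)
  have hP : rP x ρ ψ p = ∑ i ∈ S, ψ (i.1 ⊗ₜ (i.2 ⊗ₜ x)) := by
    show ψ ((TensorProduct.map LinearMap.id ((TensorProduct.mk k H H).flip x)) (ρ p)) = _
    rw [hS]
    simp only [map_sum, TensorProduct.map_tmul, LinearMap.id_apply, LinearMap.flip_apply,
      TensorProduct.mk_apply]
  rw [hP, psi_sum_tmul ψ, hS]
  simp only [TensorProduct.sum_tmul, map_sum, TensorProduct.assoc_tmul]
  refine Finset.sum_congr rfl fun i _ => ?_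
  rw [← hact1 i.1 i.2 x x u, br_xxa hχ hx u]

theorem lemD (hχ : IsHopfHeap k χ) (hx : IsGrouplike k x)
    (hcoassoc : ∀ m : M, (TensorProduct.assoc k M H H)
        ((TensorProduct.map ρ LinearMap.id) (ρ m)) =
      (TensorProduct.map LinearMap.id (Coalgebra.comul (R := k))) (ρ m))
    (hact3 : ∀ (m : M) (c d : H),
      ρ (ψ (m ⊗ₜ[k] (c ⊗ₜ[k] d))) =
        (TensorProduct.map ψ χ) (sweedlerShuffle k M H H H H H
          ((ρ m) ⊗ₜ[k]
            ((Coalgebra.comul (R := k) c) ⊗ₜ[k] (Coalgebra.comul (R := k) d)))))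
    (n : M) :
    ρ (rP x ρ ψ n) = (rP x ρ ψ n) ⊗ₜ x := by
  obtain ⟨S, hS⟩ := TensorProduct.exists_finset (ρ n)
  set Θ : ((M ⊗[k] H) ⊗[k] (H ⊗[k] H)) →ₗ[k] (M ⊗[k] H) :=
    (TensorProduct.map ψ χ) ∘ₗ (sweedlerShuffle k M H H H H H) ∘ₗ
      (TensorProduct.map LinearMap.id
        ((TensorProduct.mk k (H ⊗[k] H) (H ⊗[k] H)).flip (x ⊗ₜ x))) with hΘ
  have hΘtm : ∀ (u : M ⊗[k] H) (v : H ⊗[k] H),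
      Θ (u ⊗ₜ v) = (TensorProduct.map ψ χ)
        (sweedlerShuffle k M H H H H H (u ⊗ₜ (v ⊗ₜ (x ⊗ₜ x)))) := by
    intro u v
    simp [hΘ]
  have hPn : rP x ρ ψ n = ∑ i ∈ S, ψ (i.1 ⊗ₜ (i.2 ⊗ₜ x)) := by
    show ψ ((TensorProduct.map LinearMap.id ((TensorProduct.mk k H H).flip x)) (ρ n)) = _
    rw [hS]
    simp only [map_sum, TensorProduct.map_tmul, LinearMap.id_apply, LinearMap.flip_apply,
      TensorProduct.mk_apply]
  have s1 : ρ (rP x ρ ψ n) = Θ ((TensorProduct.map LinearMap.id (Coalgebra.comul (R := k)))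
      ((TensorProduct.map ρ LinearMap.id) (ρ n))) := by
    rw [hPn, map_sum, hS]
    simp only [map_sum, TensorProduct.map_tmul, LinearMap.id_apply]
    refine Finset.sum_congr rfl fun i _ => ?_
    rw [hact3 i.1 i.2 x, hx.1, hΘtm]
  have s2 : (TensorProduct.map ρ LinearMap.id) (ρ n)
      = (TensorProduct.assoc k M H H).symm
          ((TensorProduct.map LinearMap.id (Coalgebra.comul (R := k))) (ρ n)) := by
    rw [← hcoassoc n]
    simp
  have key : ∀ (p : M) (g : H),
      Θ ((TensorProduct.map LinearMap.id (Coalgebra.comul (R := k)))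
        ((TensorProduct.assoc k M H H).symm (p ⊗ₜ Coalgebra.comul (R := k) g)))
      = ψ (p ⊗ₜ (g ⊗ₜ x)) ⊗ₜ x := by
    intro p g
    set rg := Coalgebra.Repr.arbitrary k g
    set ra : ∀ j : H × H, Coalgebra.Repr k (rg.left j) (H × H) :=
      fun j => Coalgebra.Repr.arbitrary k (rg.left j)
    set Λ : (H ⊗[k] (H ⊗[k] H)) →ₗ[k] (M ⊗[k] H) :=
      Θ ∘ₗ (TensorProduct.assoc k M H (H ⊗[k] H)).symm.toLinearMap ∘ₗ
        (TensorProduct.mk k M (H ⊗[k] (H ⊗[k] H)) p) with hΛ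
    have hΛtm : ∀ (a : H) (w : H ⊗[k] H), Λ (a ⊗ₜ w) = Θ ((p ⊗ₜ a) ⊗ₜ w) := by
      intro a w
      simp [hΛ]
    have e0 : Θ ((TensorProduct.map LinearMap.id (Coalgebra.comul (R := k)))
        ((TensorProduct.assoc k M H H).symm (p ⊗ₜ Coalgebra.comul (R := k) g)))
        = Λ (((Coalgebra.comul (R := k)).lTensor H) (Coalgebra.comul (R := k) g)) := by
      rw [← rg.eq]
      simp only [TensorProduct.tmul_sum, map_sum, TensorProduct.assoc_symm_tmul,
        TensorProduct.map_tmul, LinearMap.id_apply, LinearMap.lTensor_tmul]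
      exact Finset.sum_congr rfl fun j _ => (hΛtm _ _).symm
    rw [e0, ← Coalgebra.coassoc_apply g, ← rg.eq]
    simp only [map_sum, LinearMap.rTensor_tmul]
    have e1 : ∀ j ∈ rg.index,
        Λ ((TensorProduct.assoc k H H H)
            ((Coalgebra.comul (R := k) (rg.left j)) ⊗ₜ rg.right j))
        = Coalgebra.counit (R := k) (rg.left j) • (ψ (p ⊗ₜ (rg.right j ⊗ₜ x)) ⊗ₜ x) := by
      intro j _
      rw [← (ra j).eq]
      simp only [TensorProduct.sum_tmul, map_sum, TensorProduct.assoc_tmul]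
      have e2 : ∀ t ∈ (ra j).index,
          Λ ((ra j).left t ⊗ₜ ((ra j).right t ⊗ₜ rg.right j))
          = ψ (p ⊗ₜ (rg.right j ⊗ₜ x)) ⊗ₜ
              br k χ ((ra j).left t) ((ra j).right t) x := by
        intro t _
        rw [hΛtm, hΘtm]
        simp only [sweedlerShuffle_tmul, TensorProduct.map_tmul]
        rfl
      rw [Finset.sum_congr rfl e2, ← TensorProduct.tmul_sum, sum_br_left hχ (ra j) x,
        TensorProduct.tmul_smul]
    rw [Finset.sum_congr rfl e1]
    have e3 : ∑ j ∈ rg.index, Coalgebra.counit (R := k) (rg.left j) •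
        (ψ (p ⊗ₜ (rg.right j ⊗ₜ x)) ⊗ₜ[k] x)
        = (∑ j ∈ rg.index, Coalgebra.counit (R := k) (rg.left j) •
            ψ (p ⊗ₜ (rg.right j ⊗ₜ x))) ⊗ₜ[k] x := by
      rw [TensorProduct.sum_tmul]
      exact Finset.sum_congr rfl fun j _ => (TensorProduct.smul_tmul' _ _ _).symm
    rw [e3]
    congr 1
    set q : H →ₗ[k] M :=
      ψ ∘ₗ (TensorProduct.mk k M (H ⊗[k] H) p) ∘ₗ ((TensorProduct.mk k H H).flip x) with hq
    have hqt : ∀ b : H, q b = ψ (p ⊗ₜ (b ⊗ₜ x)) := fun b => rfl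
    calc ∑ j ∈ rg.index, Coalgebra.counit (R := k) (rg.left j) •
          ψ (p ⊗ₜ (rg.right j ⊗ₜ x))
        = ∑ j ∈ rg.index, q (Coalgebra.counit (R := k) (rg.left j) • rg.right j) := by
          exact Finset.sum_congr rfl fun j _ => (map_smul q _ _).symm
      _ = q (∑ j ∈ rg.index, Coalgebra.counit (R := k) (rg.left j) • rg.right j) :=
          (map_sum q _ _).symm
      _ = ψ (p ⊗ₜ (g ⊗ₜ x)) := by rw [repr_counit_smul_right rg, hqt]
  rw [s1, s2, hS]
  simp only [map_sum, TensorProduct.map_tmul, LinearMap.id_apply]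
  rw [Finset.sum_congr rfl (fun i _ => key i.1 i.2), ← TensorProduct.sum_tmul, ← hPn]

theorem lemH (hχ : IsHopfHeap k χ)
    (hcomm : ∀ a b c : H, br k χ a b c = br k χ c b a) (hx : IsGrouplike k x)
    (B : H →ₗ[k] H)
    (hεB : ∀ a : H, Coalgebra.counit (R := k) (B a) = Coalgebra.counit (R := k) a)
    (hcoassoc : ∀ m : M, (TensorProduct.assoc k M H H)
        ((TensorProduct.map ρ LinearMap.id) (ρ m)) =
      (TensorProduct.map LinearMap.id (Coalgebra.comul (R := k))) (ρ m))
    (hcounit : ∀ m : M, (TensorProduct.rid k M)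
        ((TensorProduct.map LinearMap.id (Coalgebra.counit (R := k))) (ρ m)) = m)
    (hact1 : ∀ (m : M) (a b c d : H),
      ψ (m ⊗ₜ[k] (a ⊗ₜ[k] br k χ b c d)) = ψ (ψ (m ⊗ₜ[k] (a ⊗ₜ[k] b)) ⊗ₜ[k] (c ⊗ₜ[k] d)))
    (hact2 : ∀ (m : M) (c : H),
      ψ (m ⊗ₜ[k] (Coalgebra.comul (R := k) c)) = Coalgebra.counit (R := k) c • m)
    (hact3 : ∀ (m : M) (c d : H),
      ρ (ψ (m ⊗ₜ[k] (c ⊗ₜ[k] d))) =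
        (TensorProduct.map ψ χ) (sweedlerShuffle k M H H H H H
          ((ρ m) ⊗ₜ[k]
            ((Coalgebra.comul (R := k) c) ⊗ₜ[k] (Coalgebra.comul (R := k) d)))))
    (w : M) :
    ψ ((TensorProduct.assoc k M H H) ((TensorProduct.map ρ LinearMap.id)
      ((TensorProduct.map (ψ ∘ₗ TensorProduct.map LinearMap.id (TensorProduct.map B B))
        LinearMap.id)
        (rbShuffle k M H H H ((TensorProduct.map LinearMap.id (comul2 k)) (ρ w)))))) = w := by
  obtain ⟨S, hS⟩ := TensorProduct.exists_finset (ρ w)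
  -- the per-term collapse
  have main : ∀ i ∈ S,
      ψ ((TensorProduct.assoc k M H H) ((TensorProduct.map ρ LinearMap.id)
        ((TensorProduct.map (ψ ∘ₗ TensorProduct.map LinearMap.id (TensorProduct.map B B))
          LinearMap.id)
          (rbShuffle k M H H H (i.1 ⊗ₜ comul2 k i.2)))))
      = ψ ((TensorProduct.assoc k M H H) ((ρ i.1) ⊗ₜ i.2)) := by
    rintro ⟨n, h⟩ -
    set rh := Coalgebra.Repr.arbitrary k h with hrh
    set rg2 : ∀ j : H × H, Coalgebra.Repr k (rh.right j) (H × H) :=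
      fun j => Coalgebra.Repr.arbitrary k (rh.right j) with hrg2
    have hc2 : comul2 k h = ∑ j ∈ rh.index, ∑ t ∈ (rg2 j).index,
        rh.left j ⊗ₜ ((rg2 j).left t ⊗ₜ (rg2 j).right t) := by
      show (TensorProduct.map LinearMap.id (Coalgebra.comul (R := k)))
        (Coalgebra.comul (R := k) h) = _
      rw [← rh.eq]
      simp only [map_sum, TensorProduct.map_tmul, LinearMap.id_apply]
      exact Finset.sum_congr rfl fun j _ => by rw [← (rg2 j).eq, TensorProduct.tmul_sum]
    rw [hc2]
    simp only [TensorProduct.tmul_sum, map_sum, rbShuffle_tmul, TensorProduct.map_tmul,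
      LinearMap.id_apply, LinearMap.comp_apply]
    -- now : ∑ j ∑ t, ψ (assoc (ρ (ψ (n ⊗ₜ (B v ⊗ₜ B l))) ⊗ₜ u)) where l = rh.left j
    have perjt : ∀ j ∈ rh.index, ∀ t ∈ (rg2 j).index,
        ψ ((TensorProduct.assoc k M H H)
          ((ρ (ψ (n ⊗ₜ (B ((rg2 j).right t) ⊗ₜ B (rh.left j))))) ⊗ₜ ((rg2 j).left t)))
        = Coalgebra.counit (R := k) ((rg2 j).right t) •
            (Coalgebra.counit (R := k) (rh.left j) •
              ψ ((TensorProduct.assoc k M H H) ((ρ n) ⊗ₜ ((rg2 j).left t)))) := by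
      intro j _ t _
      set v := (rg2 j).right t
      set l := rh.left j
      set u := (rg2 j).left t
      obtain ⟨Sn, hSn⟩ := TensorProduct.exists_finset (ρ n)
      set rv := Coalgebra.Repr.arbitrary k (B v) with hrv
      set rl := Coalgebra.Repr.arbitrary k (B l) with hrl
      rw [hact3 n (B v) (B l), ← rv.eq, ← rl.eq, hSn]
      simp only [TensorProduct.sum_tmul]
      simp only [TensorProduct.tmul_sum]
      simp only [map_sum, sweedlerShuffle_tmul, TensorProduct.map_tmul,
        TensorProduct.sum_tmul, TensorProduct.assoc_tmul]
      simp only [br_fold]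
      -- now a triple sum ∑_{s∈Sn} ∑_{a∈rv} ∑_{e∈rl}
      have pers : ∀ s ∈ Sn,
          ∑ a ∈ rv.index, ∑ e ∈ rl.index,
            ψ ((ψ (s.1 ⊗ₜ (rv.right a ⊗ₜ rl.left e))) ⊗ₜ
              (br k χ s.2 (rv.left a) (rl.right e) ⊗ₜ u))
          = Coalgebra.counit (R := k) v •
              (Coalgebra.counit (R := k) l • ψ (s.1 ⊗ₜ (s.2 ⊗ₜ u))) := by
        intro s _
        have pera : ∀ a ∈ rv.index,
            ∑ e ∈ rl.index,
              ψ ((ψ (s.1 ⊗ₜ (rv.right a ⊗ₜ rl.left e))) ⊗ₜ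
                (br k χ s.2 (rv.left a) (rl.right e) ⊗ₜ u))
            = Coalgebra.counit (R := k) l •
                ψ (s.1 ⊗ₜ (rv.right a ⊗ₜ br k χ (rv.left a) s.2 u)) := by
          intro a _
          have pere : ∀ e ∈ rl.index,
              ψ ((ψ (s.1 ⊗ₜ (rv.right a ⊗ₜ rl.left e))) ⊗ₜ
                (br k χ s.2 (rv.left a) (rl.right e) ⊗ₜ u))
              = ψ (s.1 ⊗ₜ (rv.right a ⊗ₜ
                  br k χ (rl.left e) (br k χ (rl.right e) (rv.left a) s.2) u)) := by
            intro e _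
            rw [← hact1 s.1 (rv.right a) (rl.left e) _ u, hcomm s.2 (rv.left a) (rl.right e)]
          rw [Finset.sum_congr rfl pere, ← psi_tmul_sum ψ, ← TensorProduct.tmul_sum,
            claimI hχ hcomm hx (rv.left a) s.2 u rl, hεB,
            TensorProduct.tmul_smul, TensorProduct.tmul_smul, map_smul]
        rw [Finset.sum_congr rfl pera, ← Finset.smul_sum,
          claimII hχ hcomm hact1 hact2 s.1 s.2 u rv, hεB, smul_comm]
      rw [Finset.sum_congr rfl pers]
      rw [← Finset.smul_sum]
      rw [← Finset.smul_sum]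
    -- collapse the j,t sums
    set Gi : H →ₗ[k] M := ψ ∘ₗ (TensorProduct.assoc k M H H).toLinearMap ∘ₗ
      (TensorProduct.mk k (M ⊗[k] H) H (ρ n)) with hGi
    have hGit : ∀ u : H, Gi u = ψ ((TensorProduct.assoc k M H H) ((ρ n) ⊗ₜ u)) :=
      fun u => rfl
    have perj : ∀ j ∈ rh.index,
        ∑ t ∈ (rg2 j).index,
          ψ ((TensorProduct.assoc k M H H)
            ((ρ (ψ (n ⊗ₜ (B ((rg2 j).right t) ⊗ₜ B (rh.left j))))) ⊗ₜ ((rg2 j).left t)))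
        = Coalgebra.counit (R := k) (rh.left j) • Gi (rh.right j) := by
      intro j hj
      rw [Finset.sum_congr rfl (fun t ht => perjt j hj t ht)]
      have step1 : ∀ t ∈ (rg2 j).index,
          Coalgebra.counit (R := k) ((rg2 j).right t) •
            (Coalgebra.counit (R := k) (rh.left j) •
              ψ ((TensorProduct.assoc k M H H) ((ρ n) ⊗ₜ ((rg2 j).left t))))
          = Coalgebra.counit (R := k) (rh.left j) •
              Gi (Coalgebra.counit (R := k) ((rg2 j).right t) • (rg2 j).left t) := by
        intro t _
        rw [map_smul, ← hGit, smul_comm]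
      rw [Finset.sum_congr rfl step1, ← Finset.smul_sum, ← map_sum,
        repr_counit_smul_left (rg2 j)]
    rw [Finset.sum_congr rfl perj]
    have : ∑ j ∈ rh.index, Coalgebra.counit (R := k) (rh.left j) • Gi (rh.right j)
        = Gi h := by
      have h' := congrArg Gi (repr_counit_smul_right rh)
      rw [map_sum] at h'
      simp only [map_smul] at h'
      exact h'
    rw [this, hGit]
  -- assemble
  rw [hS]
  simp only [map_sum, TensorProduct.map_tmul, LinearMap.id_apply]
  rw [Finset.sum_congr rfl main]
  have : ∑ i ∈ S, ψ ((TensorProduct.assoc k M H H) ((ρ i.1) ⊗ₜ i.2))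
      = ψ ((TensorProduct.assoc k M H H) ((TensorProduct.map ρ LinearMap.id) (ρ w))) := by
    rw [hS]
    simp only [map_sum, TensorProduct.map_tmul, LinearMap.id_apply]
  rw [this]
  exact lemE hcoassoc hcounit hact2 w

theorem ralphaT_tmul (ψ : (M ⊗[k] (H ⊗[k] H)) →ₗ[k] M) (q : M) (g : H) :
    ralphaT x ψ (q ⊗ₜ g) = ψ (q ⊗ₜ (x ⊗ₜ g)) := rfl

end ModuleSide

end RBAux

/-- structure theorem for Rota–Baxter Hopf heap modules: for a Rota–Baxter
Hopf heap module `(M,T)` over a Rota–Baxter commutative Hopf heap `(H,B)` with `ε∘B = ε`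
and a group-like `x`, the map `T̂` lands in `M^{coH}_x ⊗ H`, and
`α : M^{coH}_x ⊗ H → M`, `m ⊗ h ↦ m ◁ (x ⊗ h)`, is an isomorphism of Rota–Baxter Hopf heap
modules over `(H,B)`. -/
theorem rb_hopfHeapModule_structure_theorem {k : Type*} [Field k] {H : Type*}
    [AddCommGroup H] [Module k H] [Coalgebra k H] {M : Type*} [AddCommGroup M] [Module k M]
    (χ : (H ⊗[k] (H ⊗[k] H)) →ₗ[k] H) (hχ : IsHopfHeap k χ)
    (hcomm : ∀ a b c : H, br k χ a b c = br k χ c b a)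
    (B : H →ₗ[k] H) (hB : IsRBOp k χ B)
    (hεB : ∀ a : H, Coalgebra.counit (R := k) (B a) = Coalgebra.counit (R := k) a)
    (x : H) (hx : IsGrouplike k x)
    (ρ : M →ₗ[k] (M ⊗[k] H)) (ψ : (M ⊗[k] (H ⊗[k] H)) →ₗ[k] M) (T : M →ₗ[k] M)
    -- `(M, ρ)` is a coassociative counital right comodule
    (hcoassoc : ∀ m : M, (TensorProduct.assoc k M H H)
        ((TensorProduct.map ρ LinearMap.id) (ρ m)) =
      (TensorProduct.map LinearMap.id (Coalgebra.comul (R := k))) (ρ m))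
    (hcounit : ∀ m : M, (TensorProduct.rid k M)
        ((TensorProduct.map LinearMap.id (Coalgebra.counit (R := k))) (ρ m)) = m)
    -- `m ◁ (a ⊗ [b,c,d]) = (m ◁ (a ⊗ b)) ◁ (c ⊗ d)`
    (hact1 : ∀ (m : M) (a b c d : H),
      ψ (m ⊗ₜ[k] (a ⊗ₜ[k] br k χ b c d)) = ψ (ψ (m ⊗ₜ[k] (a ⊗ₜ[k] b)) ⊗ₜ[k] (c ⊗ₜ[k] d)))
    -- `m ◁ (c₁ ⊗ c₂) = ε(c) m`
    (hact2 : ∀ (m : M) (c : H),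
      ψ (m ⊗ₜ[k] (Coalgebra.comul (R := k) c)) = Coalgebra.counit (R := k) c • m)
    -- `ρ(m ◁ (c ⊗ d)) = (m₍₀₎ ◁ (c₂ ⊗ d₁)) ⊗ [m₍₁₎, c₁, d₂]`
    (hact3 : ∀ (m : M) (c d : H),
      ρ (ψ (m ⊗ₜ[k] (c ⊗ₜ[k] d))) =
        (TensorProduct.map ψ χ) (sweedlerShuffle k M H H H H H
          ((ρ m) ⊗ₜ[k]
            ((Coalgebra.comul (R := k) c) ⊗ₜ[k] (Coalgebra.comul (R := k) d)))))
    -- the Rota–Baxter module condition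
    -- `T(m₍₀₎) ⊗ B(m₍₁₎) = T(m)₍₀₎ ◁ (B(T(m)₍₁₎₃) ⊗ B(T(m)₍₁₎₁)) ⊗ T(m)₍₁₎₂`
    (hRBmod : ∀ m : M, (TensorProduct.map T B) (ρ m) =
      (TensorProduct.map (ψ ∘ₗ TensorProduct.map LinearMap.id (TensorProduct.map B B))
        LinearMap.id)
        (rbShuffle k M H H H ((TensorProduct.map LinearMap.id (comul2 k)) (ρ (T m))))) :
    -- (a) `T̂` takes values in `M^{coH}_x ⊗ H`
    (∀ z : ↥(rcoinv x ρ) ⊗[k] H, rThat x ρ ψ T B z ∈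
      LinearMap.range (TensorProduct.map (rcoinv x ρ).subtype (LinearMap.id : H →ₗ[k] H))) ∧
    -- (b) `α` is an isomorphism of Rota–Baxter Hopf heap modules
    (Function.Bijective ⇑(ralpha x ρ ψ) ∧
      (∀ z : ↥(rcoinv x ρ) ⊗[k] H, ρ (ralpha x ρ ψ z) =
        (TensorProduct.map (ralpha x ρ ψ) LinearMap.id) (rrhoN x ρ z)) ∧
      (∀ (z : ↥(rcoinv x ρ) ⊗[k] H) (g l : H),
        ralpha x ρ ψ (rpsiN χ x ρ (z ⊗ₜ[k] (g ⊗ₜ[k] l))) =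
          ψ (ralpha x ρ ψ z ⊗ₜ[k] (g ⊗ₜ[k] l))) ∧
      T ∘ₗ ralpha x ρ ψ = (ralphaT x ψ) ∘ₗ rThat x ρ ψ T B) := by
  -- membership of the projection in the coinvariants
  have hPmem : ∀ n : M, rP x ρ ψ n ∈ rcoinv x ρ := by
    intro n
    have h0 : (ρ - (TensorProduct.mk k M H).flip x) (rP x ρ ψ n) = 0 := by
      rw [LinearMap.sub_apply, lemD hχ hx hcoassoc hact3 n]
      simp
    exact LinearMap.mem_ker.mpr h0
  set Pc : M →ₗ[k] ↥(rcoinv x ρ) :=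
    (rP x ρ ψ).codRestrict (rcoinv x ρ) hPmem with hPc
  have hPcval : ∀ n : M, (Pc n : M) = rP x ρ ψ n := fun n => rfl
  have hmem : ∀ m : ↥(rcoinv x ρ), ρ (↑m : M) = (↑m : M) ⊗ₜ x := by
    intro m
    have h2 : (ρ - (TensorProduct.mk k M H).flip x) (↑m : M) = 0 :=
      LinearMap.mem_ker.mp m.2
    rw [LinearMap.sub_apply, sub_eq_zero] at h2
    simpa using h2
  have halpha : ∀ (m : ↥(rcoinv x ρ)) (h : H),
      ralpha x ρ ψ (m ⊗ₜ h) = ψ ((↑m : M) ⊗ₜ (x ⊗ₜ h)) := fun m h => rfl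
  -- (b2) : colinearity, proved first since it is used for bijectivity
  have hb2 : ∀ z : ↥(rcoinv x ρ) ⊗[k] H, ρ (ralpha x ρ ψ z) =
      (TensorProduct.map (ralpha x ρ ψ) LinearMap.id) (rrhoN x ρ z) := by
    intro z
    induction z using TensorProduct.induction_on with
    | zero => simp
    | add u v hu hv => simp only [map_add, hu, hv]
    | tmul m h =>
      rw [halpha, lemC hχ hx hact3 (↑m : M) (hmem m) h]
      have hrr : rrhoN x ρ (m ⊗ₜ h) = (TensorProduct.assoc k _ H H).symm
          (m ⊗ₜ Coalgebra.comul (R := k) h) := rfl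
      rw [hrr]
      set r := Coalgebra.Repr.arbitrary k h
      rw [← r.eq]
      simp only [TensorProduct.tmul_sum, map_sum, TensorProduct.assoc_symm_tmul,
        TensorProduct.map_tmul, LinearMap.id_apply, LinearMap.comp_apply,
        TensorProduct.mk_apply]
      rfl
  -- the inverse of α
  set β : M →ₗ[k] ↥(rcoinv x ρ) ⊗[k] H :=
    (TensorProduct.map Pc LinearMap.id) ∘ₗ ρ with hβ
  have hαβ : ∀ n : M, ralpha x ρ ψ (β n) = n := by
    intro n
    obtain ⟨S, hS⟩ := TensorProduct.exists_finset (ρ n)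
    have e1 : β n = ∑ i ∈ S, Pc i.1 ⊗ₜ i.2 := by
      rw [hβ, LinearMap.comp_apply, hS]
      simp only [map_sum, TensorProduct.map_tmul, LinearMap.id_apply]
    rw [e1, map_sum]
    have e2 : ∀ i ∈ S, ralpha x ρ ψ (Pc i.1 ⊗ₜ i.2)
        = ψ ((TensorProduct.assoc k M H H) ((ρ i.1) ⊗ₜ i.2)) := by
      intro i _
      rw [halpha, hPcval]
      exact lemF hχ hx hact1 i.1 i.2
    rw [Finset.sum_congr rfl e2]
    have e3 : ∑ i ∈ S, ψ ((TensorProduct.assoc k M H H) ((ρ i.1) ⊗ₜ i.2))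
        = ψ ((TensorProduct.assoc k M H H) ((TensorProduct.map ρ LinearMap.id) (ρ n))) := by
      rw [hS]
      simp only [map_sum, TensorProduct.map_tmul, LinearMap.id_apply]
    rw [e3]
    exact lemE hcoassoc hcounit hact2 n
  have hβα : ∀ z : ↥(rcoinv x ρ) ⊗[k] H, β (ralpha x ρ ψ z) = z := by
    intro z
    induction z using TensorProduct.induction_on with
    | zero => simp
    | add u v hu hv => simp only [map_add, hu, hv]
    | tmul m h =>
      rw [halpha, hβ, LinearMap.comp_apply, lemC hχ hx hact3 (↑m : M) (hmem m) h]
      set r := Coalgebra.Repr.arbitrary k h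
      rw [← r.eq]
      simp only [map_sum, TensorProduct.map_tmul, LinearMap.id_apply, LinearMap.comp_apply,
        TensorProduct.mk_apply]
      have e4 : ∀ i ∈ r.index,
          Pc (ψ ((↑m : M) ⊗ₜ (x ⊗ₜ r.left i))) ⊗ₜ[k] r.right i
          = m ⊗ₜ (Coalgebra.counit (R := k) (r.left i) • r.right i) := by
        intro i _
        have e5 : Pc (ψ ((↑m : M) ⊗ₜ (x ⊗ₜ r.left i)))
            = Coalgebra.counit (R := k) (r.left i) • m := by
          apply Subtype.ext
          rw [hPcval]
          exact lemG hχ hx hact1 hact2 hact3 (↑m : M) (hmem m) (r.left i)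
        rw [e5, TensorProduct.smul_tmul]
      rw [Finset.sum_congr rfl e4, ← TensorProduct.tmul_sum, repr_counit_smul_right r]
  refine ⟨?_, Function.bijective_iff_has_inverse.mpr ⟨β, hβα, hαβ⟩, hb2, ?_, ?_⟩
  · -- (a)
    intro z
    set Fc : (M ⊗[k] H) →ₗ[k] ↥(rcoinv x ρ) := Pc ∘ₗ T ∘ₗ ralphaT x ψ with hFc
    have hsub : (rcoinv x ρ).subtype ∘ₗ Fc = rF x ρ ψ T := by
      apply LinearMap.ext; intro t; rfl
    refine ⟨(TensorProduct.map Fc B) ((TensorProduct.assoc k M H H).symm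
      ((TensorProduct.map (rcoinv x ρ).subtype (Coalgebra.comul (R := k))) z)), ?_⟩
    have key : (TensorProduct.map (rcoinv x ρ).subtype (LinearMap.id : H →ₗ[k] H)) ∘ₗ
        (TensorProduct.map Fc B) = TensorProduct.map (rF x ρ ψ T) B := by
      rw [← TensorProduct.map_comp, hsub, LinearMap.id_comp]
    have := LinearMap.congr_fun key ((TensorProduct.assoc k M H H).symm
      ((TensorProduct.map (rcoinv x ρ).subtype (Coalgebra.comul (R := k))) z))
    rw [LinearMap.comp_apply] at this
    rw [this]
    rfl
  · -- (b3)
    intro z g l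
    induction z using TensorProduct.induction_on with
    | zero => simp
    | add u v hu hv =>
      simp only [TensorProduct.add_tmul, map_add, hu, hv]
    | tmul m h =>
      have e1 : rpsiN χ x ρ ((m ⊗ₜ h) ⊗ₜ (g ⊗ₜ l)) = m ⊗ₜ br k χ h g l := rfl
      rw [e1, halpha, halpha, hact1]
  · -- (b4)
    apply TensorProduct.ext'
    intro m h
    simp only [LinearMap.comp_apply]
    rw [halpha]
    -- compute the right-hand side
    have hTh : rThat x ρ ψ T B (m ⊗ₜ h) = (TensorProduct.map (rF x ρ ψ T) B)
        ((TensorProduct.assoc k M H H).symm ((↑m : M) ⊗ₜ Coalgebra.comul (R := k) h)) := rfl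
    rw [hTh]
    set r := Coalgebra.Repr.arbitrary k h
    rw [← r.eq]
    simp only [TensorProduct.tmul_sum, map_sum, TensorProduct.assoc_symm_tmul,
      TensorProduct.map_tmul]
    have e1 : ∀ i ∈ r.index,
        ralphaT x ψ (rF x ρ ψ T ((↑m : M) ⊗ₜ r.left i) ⊗ₜ B (r.right i))
        = ψ ((TensorProduct.assoc k M H H)
            ((ρ (T (ψ ((↑m : M) ⊗ₜ (x ⊗ₜ r.left i))))) ⊗ₜ B (r.right i))) := by
      intro i _
      rw [ralphaT_tmul]
      exact lemF hχ hx hact1 _ _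
    rw [Finset.sum_congr rfl e1]
    set D : (M ⊗[k] H) →ₗ[k] M := ψ ∘ₗ (TensorProduct.assoc k M H H).toLinearMap ∘ₗ
      (TensorProduct.map ρ LinearMap.id) with hD
    have hDt : ∀ (q : M) (g' : H), D (q ⊗ₜ g')
        = ψ ((TensorProduct.assoc k M H H) ((ρ q) ⊗ₜ g')) := fun q g' => rfl
    have e2 : ∑ i ∈ r.index, ψ ((TensorProduct.assoc k M H H)
          ((ρ (T (ψ ((↑m : M) ⊗ₜ (x ⊗ₜ r.left i))))) ⊗ₜ B (r.right i)))
        = D ((TensorProduct.map T B) (ρ (ψ ((↑m : M) ⊗ₜ (x ⊗ₜ h))))) := by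
      rw [lemC hχ hx hact3 (↑m : M) (hmem m) h, ← r.eq]
      simp only [map_sum, TensorProduct.map_tmul, LinearMap.id_apply, LinearMap.comp_apply,
        TensorProduct.mk_apply]
      exact Finset.sum_congr rfl fun i _ => (hDt _ _).symm
    rw [e2, hRBmod]
    exact (lemH hχ hcomm hx B hεB hcoassoc hcounit hact1 hact2 hact3
      (T (ψ ((↑m : M) ⊗ₜ (x ⊗ₜ h))))).symm
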